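/- arXiv:2305.18180 — 10 statements merged into one kernel-verified Lean document; each statement's English description precedes it below -/
import Mathlib

section
/- The series $\sum_{n \geq 1,\ s_2(n) = k} 1/n$ converges for every fixed $k \geq 1$, where $s_2(n)$ is the sum of the binary digits of $n$. -/
open Nat

private lemma s2_odd (n : ℕ) : (Nat.digits 2 (2 * n + 1)).sum = (Nat.digits 2 n).sum + 1 := by
  rw [Nat.digits_def' (by norm_num : 1 < 2) (by omega)]
  have h1 : (2 * n + 1) % 2 = 1 := by omega
  have h2 : (2 * n + 1) / 2 = n := by omega
  rw [h1, h2, List.sum_cons]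
  ring

private lemma s2_even {n : ℕ} (hn : n ≠ 0) :
    (Nat.digits 2 (2 * n)).sum = (Nat.digits 2 n).sum := by
  rw [Nat.digits_def' (by norm_num : 1 < 2) (by omega)]
  have h1 : (2 * n) % 2 = 0 := by omega
  have h2 : (2 * n) / 2 = n := by omega
  rw [h1, h2, List.sum_cons, zero_add]

private lemma s2_pow_mul (j : ℕ) {n : ℕ} (hn : n ≠ 0) :
    (Nat.digits 2 (2 ^ j * n)).sum = (Nat.digits 2 n).sum := by
  induction j with
  | zero => simp
  | succ j ih =>
      have : 2 ^ (j + 1) * n = 2 * (2 ^ j * n) := by ring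
      rw [this, s2_even (by positivity), ih]

private lemma s2_ne_zero : ∀ n : ℕ, n ≠ 0 → (Nat.digits 2 n).sum ≠ 0 := by
  intro n
  induction n using Nat.strong_induction_on with
  | _ n ih =>
    intro hn
    rcases Nat.even_or_odd n with ⟨q, hq⟩ | ⟨q, hq⟩
    · have hq' : q ≠ 0 := by omega
      have : n = 2 * q := by omega
      rw [this, s2_even hq']
      exact ih q (by omega) hq'
    · rw [hq, s2_odd]
      omega

private noncomputable def g (k : ℕ) : ℕ → ℝ :=
  fun m => if (Nat.digits 2 m).sum = k then (1 : ℝ) / (2 * m + 1) else 0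

private lemma e_inj : Function.Injective (fun p : ℕ × ℕ => 2 ^ p.1 * (2 * p.2 + 1)) := by
  intro ⟨a, b⟩ ⟨c, d⟩ h
  simp only [Prod.mk.injEq] at h ⊢
  have hac : a = c := by
    by_contra hne
    rcases Nat.lt_or_ge a c with hlt | hge
    · have : 2 ^ a * (2 * b + 1) = 2 ^ a * (2 ^ (c - a) * (2 * d + 1)) := by
        rw [h, ← mul_assoc, ← pow_add]
        congr 2
        omega
      have h2 : 2 * b + 1 = 2 ^ (c - a) * (2 * d + 1) :=
        Nat.eq_of_mul_eq_mul_left (Nat.pow_pos (by norm_num)) this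
      have hca : 1 ≤ c - a := by omega
      obtain ⟨t, ht⟩ : (2 : ℕ) ∣ 2 ^ (c - a) := dvd_pow_self 2 (by omega)
      rw [ht, mul_assoc] at h2
      omega
    · have hlt : c < a := by omega
      have : 2 ^ c * (2 ^ (a - c) * (2 * b + 1)) = 2 ^ c * (2 * d + 1) := by
        rw [← mul_assoc, ← pow_add, ← h]
        congr 2
        omega
      have h2 : 2 ^ (a - c) * (2 * b + 1) = 2 * d + 1 :=
        Nat.eq_of_mul_eq_mul_left (Nat.pow_pos (by norm_num)) this
      obtain ⟨t, ht⟩ : (2 : ℕ) ∣ 2 ^ (a - c) := dvd_pow_self 2 (by omega)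
      rw [ht, mul_assoc] at h2
      omega
  subst hac
  refine ⟨rfl, ?_⟩
  have := Nat.eq_of_mul_eq_mul_left (Nat.pow_pos (by norm_num)) h
  omega

private lemma stepA {k : ℕ} (hg : Summable (g k)) :
    Summable (fun n : ℕ => if (Nat.digits 2 n).sum = k + 1 then (1 : ℝ) / n else 0) := by
  set F : ℕ → ℝ := fun n => if (Nat.digits 2 n).sum = k + 1 then (1 : ℝ) / n else 0 with hF
  set e : ℕ × ℕ → ℕ := fun p => 2 ^ p.1 * (2 * p.2 + 1) with he
  have hrange : ∀ n ∉ Set.range e, F n = 0 := by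
    intro n hn
    rcases eq_or_ne n 0 with rfl | h0
    · simp [hF]
    · exfalso
      obtain ⟨j, m, hm, rfl⟩ := Nat.exists_eq_two_pow_mul_odd h0
      obtain ⟨b, rfl⟩ := hm
      exact hn ⟨(j, b), rfl⟩
  rw [← (e_inj).summable_iff hrange]
  have key : (F ∘ e) = fun p : ℕ × ℕ => ((1 : ℝ) / 2) ^ p.1 * g k p.2 := by
    funext ⟨a, b⟩
    simp only [Function.comp_apply, hF, he, g]
    have hs : (Nat.digits 2 (2 ^ a * (2 * b + 1))).sum = (Nat.digits 2 b).sum + 1 := by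
      rw [s2_pow_mul a (by omega), s2_odd]
    rw [hs]
    by_cases hcond : (Nat.digits 2 b).sum = k
    · simp only [hcond, if_pos rfl, if_pos rfl]
      push_cast
      rw [div_pow, one_pow, one_div, one_div, one_div, mul_inv]
    · simp only [if_neg (by omega : ¬((Nat.digits 2 b).sum + 1 = k + 1)), if_neg hcond,
        mul_zero]
  rw [key]
  exact (summable_geometric_of_lt_one (by norm_num) (by norm_num)).mul_of_nonneg hg
    (fun a => by positivity)
    (fun b => by
      simp only [g, Pi.zero_apply]
      split <;> positivity)

private lemma gsum : ∀ k : ℕ, Summable (g k) := by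
  intro k
  induction k with
  | zero =>
      apply summable_of_ne_finset_zero (s := {0})
      intro m hm
      simp only [Finset.mem_singleton] at hm
      simp only [g, if_neg (s2_ne_zero m hm)]
  | succ k ih =>
      have hF := stepA ih
      show Summable (fun m : ℕ => if (Nat.digits 2 m).sum = k + 1 then (1 : ℝ) / (2 * m + 1) else 0)
      apply Summable.of_nonneg_of_le _ _ hF
      · intro m
        split <;> positivity
      · intro m
        by_cases hcond : (Nat.digits 2 m).sum = k + 1
      
        · simp only [if_pos hcond]
          have hm : m ≠ 0 := by
            intro h0
            rw [h0] at hcond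
            simp at hcond
          have hm1 : (1 : ℝ) ≤ (m : ℝ) := by
            exact_mod_cast Nat.one_le_iff_ne_zero.mpr hm
          apply div_le_div_of_nonneg_left (by norm_num) (by linarith) (by linarith)
        · simp [if_neg hcond]

theorem kempner_s2_summable (k : ℕ) (hk : 1 ≤ k) :
    Summable (fun n : ℕ => if (Nat.digits 2 n).sum = k then (1 : ℝ) / n else 0) := by
  obtain ⟨j, rfl⟩ : ∃ j, k = j + 1 := ⟨k - 1, by omega⟩
  exact stepA (gsum j)
end

section
/- Let $A_k = \sum_{n \geq 1,\ s_2(n)=k} 1/n$. Then for $k \geq 2$, $A_k - A_1 = 2 \sum_{n \geq 1,\ s_2(n) \leq k-1} \left(\frac{1}{2n+1} - \frac{1}{2n}\right)$. -/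
open Finset

private lemma s2_two_mul (m : ℕ) :
    (Nat.digits 2 (2 * m)).sum = (Nat.digits 2 m).sum := by
  rcases Nat.eq_zero_or_pos m with h | h
  · simp [h]
  · rw [Nat.digits_def' (by norm_num : (1:ℕ) < 2) (by omega)]
    have h1 : (2 * m) % 2 = 0 := by omega
    have h2 : (2 * m) / 2 = m := by omega
    rw [h1, h2]; simp

private lemma s2_two_mul_add_one (m : ℕ) :
    (Nat.digits 2 (2 * m + 1)).sum = (Nat.digits 2 m).sum + 1 := by
  rw [Nat.digits_def' (by norm_num : (1:ℕ) < 2) (by omega)]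
  have h1 : (2 * m + 1) % 2 = 1 := by omega
  have h2 : (2 * m + 1) / 2 = m := by omega
  rw [h1, h2]; simp [Nat.add_comm]

private lemma s2_pos {n : ℕ} (h : n ≠ 0) : 0 < (Nat.digits 2 n).sum := by
  rcases Nat.pos_of_ne_zero h with _
  by_contra hs
  push_neg at hs
  have hz : (Nat.digits 2 n).sum = 0 := by omega
  have hall := List.sum_eq_zero_iff.mp hz
  have hne : Nat.digits 2 n ≠ [] := Nat.digits_ne_nil_iff_ne_zero.mpr h
  exact Nat.getLast_digit_ne_zero 2 h (hall _ (List.getLast_mem hne))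

private noncomputable def Fk (k : ℕ) : ℕ → ℝ :=
  fun n => if (Nat.digits 2 n).sum = k then (1 : ℝ) / n else 0

private noncomputable def Gk (k : ℕ) : ℕ → ℝ :=
  fun m => if (Nat.digits 2 m).sum = k then (1 : ℝ) / (2 * m + 1) else 0

private noncomputable def Hk (k : ℕ) : ℕ → ℝ :=
  fun m => if (Nat.digits 2 m).sum = k then (1 : ℝ) / (2 * m) else 0

private lemma Fk_nonneg (k n : ℕ) : 0 ≤ Fk k n := by
  unfold Fk; split <;> positivity

private lemma Gk_nonneg (k n : ℕ) : 0 ≤ Gk k n := by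
  unfold Gk; split <;> positivity

private lemma Fk_even (k m : ℕ) : Fk k (2 * m) = (1 / 2) * Fk k m := by
  unfold Fk
  rw [s2_two_mul]
  split
  · push_cast
    rcases Nat.eq_zero_or_pos m with h | h
    · simp [h]
    · field_simp
  · ring

private lemma Fk_odd (k m : ℕ) : Fk (k + 1) (2 * m + 1) = Gk k m := by
  unfold Fk Gk
  rw [s2_two_mul_add_one]
  have : (Nat.digits 2 m).sum + 1 = k + 1 ↔ (Nat.digits 2 m).sum = k := by omega
  split_ifs with h1 h2 h2
  · push_cast; ring_nf
  · exact absurd (this.mp h1) h2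
  · exact absurd (this.mpr h2) h1
  · rfl

private lemma Fk_eq_two_Hk (k m : ℕ) : Fk k m = 2 * Hk k m := by
  unfold Fk Hk
  split
  · rcases Nat.eq_zero_or_pos m with h | h
    · simp [h]
    · have : (m : ℝ) ≠ 0 := by positivity
      field_simp
  · ring

private lemma summable_Gk_aux {k : ℕ} (hFk : Summable (Fk k)) : Summable (Gk k) := by
  have h0 : Summable (fun m : ℕ => if m = 0 then (1:ℝ) else 0) := by
    apply summable_of_ne_finset_zero (s := {0})
    intro m hm
    simp at hm
    simp [hm]
  refine Summable.of_nonneg_of_le (Gk_nonneg k) (fun m => ?_) (hFk.add h0)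
  rcases Nat.eq_zero_or_pos m with h | h
  · subst h
    have hF := Fk_nonneg k 0
    have hG : Gk k 0 ≤ 1 := by
      unfold Gk; split_ifs <;> norm_num
    norm_num
    linarith
  · have h1 : Gk k m ≤ Fk k m := by
      unfold Gk Fk
      split_ifs
      · apply div_le_div_of_nonneg_left (by norm_num) (by positivity)
        have : (1:ℝ) ≤ (m:ℝ) := by exact_mod_cast h
        linarith
      · exact le_refl _
    have h2 : (0:ℝ) ≤ if m = 0 then (1:ℝ) else 0 := by split_ifs <;> norm_num
    linarith

private lemma sum_range_two_mul (f : ℕ → ℝ) (N : ℕ) :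
    ∑ i ∈ range (2 * N), f i = ∑ m ∈ range N, (f (2 * m) + f (2 * m + 1)) := by
  induction N with
  | zero => simp
  | succ n ih =>
    have : 2 * (n + 1) = (2 * n + 1) + 1 := by omega
    rw [this, Finset.sum_range_succ, Finset.sum_range_succ, ih, Finset.sum_range_succ]
    ring

private lemma summable_Fk : ∀ k, Summable (Fk k) := by
  intro k
  induction k with
  | zero =>
    have : Fk 0 = fun _ => 0 := by
      funext n
      unfold Fk
      split_ifs with h
      · rcases Nat.eq_zero_or_pos n with h0 | h0
        · simp [h0]
        · exact absurd h (by have := s2_pos (by omega : n ≠ 0); omega)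
      · rfl
    rw [this]; exact summable_zero
  | succ k ih =>
    have hG := summable_Gk_aux ih
    set C := ∑' m, Gk k m with hC
    apply summable_of_sum_range_le (c := 2 * C) (Fk_nonneg _)
    intro N
    have hmono : ∀ a b : ℕ, a ≤ b →
        ∑ i ∈ range a, Fk (k+1) i ≤ ∑ i ∈ range b, Fk (k+1) i := by
      intro a b hab
      exact Finset.sum_le_sum_of_subset_of_nonneg (Finset.range_subset_range.mpr hab)
        (fun i _ _ => Fk_nonneg _ _)
    have key : ∑ i ∈ range (2 * N), Fk (k+1) i ≤ 2 * C := by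
      have h1 := sum_range_two_mul (Fk (k+1)) N
      have h2 : ∑ m ∈ range N, (Fk (k+1) (2*m) + Fk (k+1) (2*m+1))
          = (1/2) * ∑ m ∈ range N, Fk (k+1) m + ∑ m ∈ range N, Gk k m := by
        rw [Finset.sum_add_distrib, Finset.mul_sum]
        congr 1
        · exact Finset.sum_congr rfl fun m _ => Fk_even _ _
        · exact Finset.sum_congr rfl fun m _ => Fk_odd _ _
      have h3 : ∑ m ∈ range N, Gk k m ≤ C :=
        Summable.sum_le_tsum _ (fun m _ => Gk_nonneg _ _) hG
      have h4 := hmono N (2*N) (by omega)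
      nlinarith [h1, h2, h3, h4]
    exact le_trans (hmono N (2*N) (by omega)) key

private lemma summable_Hk (k : ℕ) : Summable (Hk k) := by
  have : Hk k = fun m => (1/2) * Fk k m := by
    funext m; rw [Fk_eq_two_Hk]; ring
  rw [this]
  exact (summable_Fk k).mul_left _

private lemma tsum_Fk_succ (k : ℕ) : ∑' n, Fk (k+1) n = 2 * ∑' m, Gk k m := by
  have hs := summable_Fk (k+1)
  have he : Summable (fun m => Fk (k+1) (2*m)) := by
    have : (fun m => Fk (k+1) (2*m)) = fun m => (1/2) * Fk (k+1) m := by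
      funext m; exact Fk_even _ _
    rw [this]; exact hs.mul_left _
  have ho : Summable (fun m => Fk (k+1) (2*m+1)) := by
    have : (fun m => Fk (k+1) (2*m+1)) = Gk k := by
      funext m; exact Fk_odd _ _
    rw [this]; exact summable_Gk_aux (summable_Fk k)
  have h := tsum_even_add_odd he ho
  have he' : ∑' m, Fk (k+1) (2*m) = (1/2) * ∑' m, Fk (k+1) m := by
    have : (fun m => Fk (k+1) (2*m)) = fun m => (1/2) * Fk (k+1) m := by
      funext m; exact Fk_even _ _
    rw [this, tsum_mul_left]
  have ho' : ∑' m, Fk (k+1) (2*m+1) = ∑' m, Gk k m := by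
    congr 1; funext m; exact Fk_odd _ _
  rw [he', ho'] at h
  linarith

private lemma tsum_Fk_eq (k : ℕ) : ∑' n, Fk k n = 2 * ∑' m, Hk k m := by
  have : (Fk k) = fun m => 2 * Hk k m := by funext m; exact Fk_eq_two_Hk _ _
  rw [this, tsum_mul_left]

private noncomputable def Dk (k : ℕ) : ℝ :=
  ∑' m : ℕ, if (Nat.digits 2 m).sum = k then (1 : ℝ) / (2 * m + 1) - 1 / (2 * m) else 0

private lemma Dk_integrand (k : ℕ) :
    (fun m : ℕ => if (Nat.digits 2 m).sum = k then (1 : ℝ) / (2 * m + 1) - 1 / (2 * m) else 0)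
    = fun m => Gk k m - Hk k m := by
  funext m
  unfold Gk Hk
  split <;> ring

private lemma summable_Dk (k : ℕ) :
    Summable (fun m : ℕ => if (Nat.digits 2 m).sum = k then (1 : ℝ) / (2 * m + 1) - 1 / (2 * m) else 0) := by
  rw [Dk_integrand]
  exact (summable_Gk_aux (summable_Fk k)).sub (summable_Hk k)

private lemma step (k : ℕ) : ∑' n, Fk (k+1) n - ∑' n, Fk k n = 2 * Dk k := by
  rw [tsum_Fk_succ, tsum_Fk_eq, Dk, Dk_integrand,
    Summable.tsum_sub (summable_Gk_aux (summable_Fk k)) (summable_Hk k)]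
  ring

private lemma telescope : ∀ K : ℕ, ∑' n, Fk (K+1) n - ∑' n, Fk 1 n
    = 2 * ∑ j ∈ Finset.Icc 1 K, Dk j := by
  intro K
  induction K with
  | zero => simp
  | succ n ih =>
    rw [Finset.sum_Icc_succ_top (by omega : 1 ≤ n + 1), mul_add]
    have := step (n + 1)
    linarith

theorem kempner_A_telescoped (k : ℕ) (hk : 2 ≤ k) :
    (∑' n : ℕ, if (Nat.digits 2 n).sum = k then (1 : ℝ) / n else 0)
      - (∑' n : ℕ, if (Nat.digits 2 n).sum = 1 then (1 : ℝ) / n else 0)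
      = 2 * ∑' n : ℕ,
          if 1 ≤ (Nat.digits 2 n).sum ∧ (Nat.digits 2 n).sum ≤ k - 1 then
            (1 : ℝ) / (2 * n + 1) - 1 / (2 * n) else 0 := by
  have hk1 : k = (k - 1) + 1 := by omega
  have h1 : (∑' n : ℕ, if (Nat.digits 2 n).sum = k then (1 : ℝ) / n else 0)
      = ∑' n, Fk k n := rfl
  have h2 : (∑' n : ℕ, if (Nat.digits 2 n).sum = 1 then (1 : ℝ) / n else 0)
      = ∑' n, Fk 1 n := rfl
  rw [h1, h2, hk1, telescope (k - 1)]
  congr 1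
  have hswap : ∑ j ∈ Finset.Icc 1 (k-1), Dk j
      = ∑' m : ℕ, ∑ j ∈ Finset.Icc 1 (k-1),
          (if (Nat.digits 2 m).sum = j then (1 : ℝ) / (2 * m + 1) - 1 / (2 * m) else 0) := by
    exact (Summable.tsum_finsetSum (fun j _ => summable_Dk j)).symm
  rw [hswap]
  congr 1
  funext m
  rw [Finset.sum_ite_eq (Finset.Icc 1 (k-1)) ((Nat.digits 2 m).sum)
    (fun _ => (1 : ℝ) / (2 * m + 1) - 1 / (2 * m))]
  simp [Finset.mem_Icc]
end

section
/- $\lim_{k \to \infty} \sum_{n \geq 1,\ s_2(n) = k} \frac{1}{n} = 2 \log 2$. -/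
open Filter Topology ENNReal

namespace Kempner

def s (n : ℕ) : ℕ := (Nat.digits 2 n).sum

@[simp] lemma s_zero : s 0 = 0 := by simp [s]

lemma s_rec (n : ℕ) (hn : n ≠ 0) : s n = n % 2 + s (n / 2) := by
  unfold s
  rw [Nat.digits_def' (by norm_num) (Nat.pos_of_ne_zero hn)]
  simp

lemma s_two_mul (n : ℕ) (hn : n ≠ 0) : s (2 * n) = s n := by
  rw [s_rec (2 * n) (by omega)]
  simp [Nat.mul_div_cancel_left]

lemma s_two_mul_add_one (n : ℕ) : s (2 * n + 1) = s n + 1 := by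
  rw [s_rec (2 * n + 1) (by omega)]
  have h1 : (2 * n + 1) % 2 = 1 := by omega
  have h2 : (2 * n + 1) / 2 = n := by omega
  rw [h1, h2]; omega

lemma s_pow_mul (j m : ℕ) : s (2 ^ j * (2 * m + 1)) = s m + 1 := by
  induction j with
  | zero => simpa using s_two_mul_add_one m
  | succ j ih =>
    rw [pow_succ, mul_comm (2 ^ j) 2, mul_assoc, s_two_mul _ (by positivity), ih]

lemma phi_inj : Function.Injective (fun p : ℕ × ℕ => 2 ^ p.1 * (2 * p.2 + 1)) := by
  rintro ⟨j₁, m₁⟩ ⟨j₂, m₂⟩ h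
  simp only at h
  induction j₁ generalizing j₂ with
  | zero =>
    cases j₂ with
    | zero => simp at h ⊢; omega
    | succ j => exfalso; rw [pow_succ, mul_comm (2 ^ j) 2, mul_assoc] at h; omega
  | succ j ih =>
    cases j₂ with
    | zero => exfalso; rw [pow_succ, mul_comm (2 ^ j) 2, mul_assoc] at h; omega
    | succ j₂ =>
      have h' : 2 ^ j * (2 * m₁ + 1) = 2 ^ j₂ * (2 * m₂ + 1) := by
        have h2 : 2 * (2 ^ j * (2 * m₁ + 1)) = 2 * (2 ^ j₂ * (2 * m₂ + 1)) := by
          rw [pow_succ, pow_succ] at h; ring_nf at h ⊢; omega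
        omega
      have := ih j₂ h'
      simp at this ⊢
      omega

lemma phi_surj (n : ℕ) (hn : n ≠ 0) : ∃ p : ℕ × ℕ, 2 ^ p.1 * (2 * p.2 + 1) = n := by
  obtain ⟨k, m, hm, rfl⟩ := Nat.exists_eq_pow_mul_and_not_dvd hn 2 (by norm_num)
  have : m % 2 = 1 := by omega
  exact ⟨⟨k, m / 2⟩, by simp; omega⟩

/-! ### ENNReal versions -/

noncomputable def A (k n : ℕ) : ℝ≥0∞ := if s n = k then ((n : ℝ≥0∞))⁻¹ else 0
noncomputable def B (k m : ℕ) : ℝ≥0∞ := if s m = k then (((2 * m + 1 : ℕ) : ℝ≥0∞))⁻¹ else 0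

lemma rec_ennreal (k : ℕ) : ∑' n, A (k + 1) n = 2 * ∑' m, B k m := by
  have hsupp : Function.support (A (k + 1)) ⊆
      Set.range (fun p : ℕ × ℕ => 2 ^ p.1 * (2 * p.2 + 1)) := by
    intro n hn
    have hn0 : n ≠ 0 := by
      rintro rfl
      simp [A, s_zero] at hn
    obtain ⟨p, hp⟩ := phi_surj n hn0
    exact ⟨p, hp⟩
  rw [← Function.Injective.tsum_eq phi_inj hsupp]
  have key : ∀ p : ℕ × ℕ, A (k + 1) (2 ^ p.1 * (2 * p.2 + 1)) = (2 : ℝ≥0∞)⁻¹ ^ p.1 * B k p.2 := by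
    rintro ⟨j, m⟩
    simp only [A, B, s_pow_mul, add_left_inj]
    by_cases hm : s m = k
    · simp only [hm, if_true]
      push_cast
      rw [ENNReal.mul_inv (by left; positivity) (by left; exact ENNReal.pow_ne_top (by norm_num))]
      rw [ENNReal.inv_pow]
    · simp [hm]
  calc ∑' p : ℕ × ℕ, A (k + 1) (2 ^ p.1 * (2 * p.2 + 1))
      = ∑' p : ℕ × ℕ, (2 : ℝ≥0∞)⁻¹ ^ p.1 * B k p.2 := by simp only [key]
    _ = ∑' (j : ℕ) (m : ℕ), (2 : ℝ≥0∞)⁻¹ ^ j * B k m :=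
        ENNReal.tsum_prod (f := fun j m => (2 : ℝ≥0∞)⁻¹ ^ j * B k m)
    _ = (∑' j : ℕ, (2 : ℝ≥0∞)⁻¹ ^ j) * ∑' m, B k m := by
        rw [← ENNReal.tsum_mul_right]
        congr 1
        ext j
        rw [ENNReal.tsum_mul_left]
    _ = 2 * ∑' m, B k m := by
        rw [ENNReal.tsum_geometric, ENNReal.one_sub_inv_two, inv_inv]

lemma s_eq_zero_iff (n : ℕ) : s n = 0 ↔ n = 0 := by
  constructor
  · intro h
    by_contra hn
    obtain ⟨p, hp⟩ := phi_surj n hn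
    rw [← hp, s_pow_mul] at h
    omega
  · rintro rfl; simp

lemma sumB0 : ∑' m, B 0 m = 1 := by
  rw [tsum_eq_single 0 (fun m hm => ?_)]
  · simp [B, s_zero]
  · simp [B, s_eq_zero_iff, hm]

lemma sumA1 : ∑' n, A 1 n = 2 := by
  rw [show A 1 = A (0 + 1) from rfl, rec_ennreal 0, sumB0, mul_one]

lemma B_le_A (k m : ℕ) : B k m ≤ A k m := by
  unfold A B
  by_cases hm : s m = k
  · simp only [hm, if_true]
    exact ENNReal.inv_le_inv' (by exact_mod_cast Nat.cast_le.mpr (show m ≤ 2 * m + 1 by omega))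
  · simp [hm]

lemma A_ne_top (k n : ℕ) (hk : k ≠ 0) : A k n ≠ ∞ := by
  unfold A
  by_cases h : s n = k
  · have hn : n ≠ 0 := by rintro rfl; simp at h; omega
    simp only [h, if_true]
    simp [ENNReal.inv_ne_top, hn]
  · simp [h]

lemma B_ne_top (k m : ℕ) : B k m ≠ ∞ := by
  unfold B
  by_cases h : s m = k
  · simp only [h, if_true]
    simp [ENNReal.inv_ne_top]
  · simp [h]

lemma sumA_ne_top (k : ℕ) : ∑' n, A (k + 1) n ≠ ∞ := by
  induction k with
  | zero => rw [sumA1]; norm_num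
  | succ k ih =>
    rw [rec_ennreal (k + 1)]
    have : ∑' m, B (k + 1) m ≤ ∑' n, A (k + 1) n := ENNReal.tsum_le_tsum (B_le_A (k + 1))
    exact ENNReal.mul_ne_top (by norm_num) (ne_top_of_le_ne_top ih this)

lemma sumB_ne_top (k : ℕ) : ∑' m, B k m ≠ ∞ := by
  cases k with
  | zero => rw [sumB0]; norm_num
  | succ k =>
    exact ne_top_of_le_ne_top (sumA_ne_top k) (ENNReal.tsum_le_tsum (B_le_A (k + 1)))


/-! ### Real versions -/

noncomputable def a (k n : ℕ) : ℝ := if s n = k then (1 : ℝ) / n else 0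
noncomputable def b (k m : ℕ) : ℝ := if s m = k then (1 : ℝ) / (2 * m + 1) else 0
noncomputable def f (k : ℕ) : ℝ := ∑' n, a k n
noncomputable def g (k : ℕ) : ℝ := ∑' m, b k m

lemma A_toReal (k n : ℕ) : (A k n).toReal = a k n := by
  unfold A a
  split_ifs with h
  · rw [ENNReal.toReal_inv, ENNReal.toReal_natCast, one_div]
  · simp

lemma B_toReal (k m : ℕ) : (B k m).toReal = b k m := by
  unfold B b
  split_ifs with h
  · rw [ENNReal.toReal_inv, ENNReal.toReal_natCast, one_div]
    norm_num
  · simp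

lemma summable_a (k : ℕ) (hk : k ≠ 0) : Summable (a k) := by
  obtain ⟨k', rfl⟩ := Nat.exists_eq_succ_of_ne_zero hk
  exact (ENNReal.summable_toReal (sumA_ne_top k')).congr (fun n => A_toReal _ n)

lemma summable_b (k : ℕ) : Summable (b k) :=
  (ENNReal.summable_toReal (sumB_ne_top k)).congr (fun m => B_toReal _ m)

lemma f_eq (k : ℕ) (hk : k ≠ 0) : f k = (∑' n, A k n).toReal := by
  rw [ENNReal.tsum_toReal_eq (fun n => A_ne_top k n hk)]
  unfold f
  exact tsum_congr fun n => (A_toReal k n).symm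

lemma g_eq (k : ℕ) : g k = (∑' m, B k m).toReal := by
  rw [ENNReal.tsum_toReal_eq (fun m => B_ne_top k m)]
  exact tsum_congr fun m => (B_toReal k m).symm

lemma f_one : f 1 = 2 := by
  rw [f_eq 1 one_ne_zero, sumA1]
  simp

lemma f_rec (k : ℕ) : f (k + 1) = 2 * g k := by
  rw [f_eq (k + 1) (Nat.succ_ne_zero k), rec_ennreal k, ENNReal.toReal_mul, g_eq]
  norm_num

noncomputable def dd (k n : ℕ) : ℝ := if s n = k then (1 : ℝ) / (n * (2 * n + 1)) else 0
noncomputable def d (k : ℕ) : ℝ := ∑' n, dd k n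

lemma a_sub (k : ℕ) (hk : k ≠ 0) (n : ℕ) : a k n - 2 * b k n = dd k n := by
  unfold a b dd
  by_cases h : s n = k
  · simp only [h, if_true]
    have hn : n ≠ 0 := by rintro rfl; rw [s_zero] at h; exact hk h.symm
    have hn' : (0 : ℝ) < n := by exact_mod_cast Nat.pos_of_ne_zero hn
    field_simp
    ring
  · simp [h]

lemma summable_dd (k : ℕ) (hk : k ≠ 0) : Summable (dd k) :=
  ((summable_a k hk).sub ((summable_b k).mul_left 2)).congr (a_sub k hk)

lemma f_sub (k : ℕ) (hk : k ≠ 0) : f k - 2 * g k = d k := by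
  unfold f g d
  rw [← tsum_mul_left, ← Summable.tsum_sub (summable_a k hk) ((summable_b k).mul_left 2)]
  exact tsum_congr (a_sub k hk)

lemma f_step (k : ℕ) (hk : k ≠ 0) : f (k + 1) = f k - d k := by
  have h1 := f_sub k hk
  have h2 := f_rec k
  linarith


/-! ### Summing the differences -/

noncomputable def c' (n : ℕ) : ℝ := if n = 0 then 0 else (1 : ℝ) / (n * (2 * n + 1))

lemma c'_nonneg (n : ℕ) : 0 ≤ c' n := by
  unfold c'
  split_ifs with h
  · exact le_refl 0
  · positivity

lemma summable_c' : Summable c' := by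
  have hb : Summable (fun n : ℕ => (1 : ℝ) / (n : ℝ) ^ 2) :=
    Real.summable_one_div_nat_pow.mpr one_lt_two
  refine Summable.of_nonneg_of_le c'_nonneg (fun n => ?_) hb
  unfold c'
  split_ifs with h
  · positivity
  · have hn : (0 : ℝ) < n := by exact_mod_cast Nat.pos_of_ne_zero h
    rw [div_le_div_iff₀ (by positivity) (by positivity)]
    nlinarith

noncomputable def C (n : ℕ) : ℝ≥0∞ := ENNReal.ofReal (c' n)
noncomputable def Dt (k n : ℕ) : ℝ≥0∞ := if s n = k then C n else 0
noncomputable def D (k : ℕ) : ℝ≥0∞ := ∑' n, Dt k n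

lemma fubini : ∑' k, D (k + 1) = ∑' n, C n := by
  unfold D Dt
  rw [ENNReal.tsum_comm]
  refine tsum_congr fun n => ?_
  by_cases hn : n = 0
  · subst hn
    simp [s_zero, C, c']
  · have hs : s n ≠ 0 := fun h => hn ((s_eq_zero_iff n).mp h)
    obtain ⟨k₀, hk₀⟩ := Nat.exists_eq_succ_of_ne_zero hs
    rw [tsum_eq_single k₀ (fun k hk => by rw [if_neg (by omega)])]
    rw [if_pos (by omega)]

lemma total_C : ∑' n, C n = ENNReal.ofReal (∑' n, c' n) :=
  (ENNReal.ofReal_tsum_of_nonneg c'_nonneg summable_c').symm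

lemma total_C_ne_top : ∑' n, C n ≠ ∞ := by
  rw [total_C]; exact ENNReal.ofReal_ne_top

lemma sum_D_ne_top : ∑' k, D (k + 1) ≠ ∞ := by rw [fubini]; exact total_C_ne_top

lemma D_ne_top (k : ℕ) : D (k + 1) ≠ ∞ :=
  ne_top_of_le_ne_top sum_D_ne_top (ENNReal.le_tsum k)

lemma Dt_ne_top (k n : ℕ) : Dt k n ≠ ∞ := by
  unfold Dt C
  split_ifs
  · exact ENNReal.ofReal_ne_top
  · exact ENNReal.zero_ne_top

lemma Dt_toReal (k n : ℕ) : (Dt (k + 1) n).toReal = dd (k + 1) n := by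
  unfold Dt dd C
  split_ifs with h
  · rw [ENNReal.toReal_ofReal (c'_nonneg n)]
    have hn : n ≠ 0 := by
      rintro rfl; rw [s_zero] at h; omega
    unfold c'
    rw [if_neg hn]
  · simp

lemma d_eq (k : ℕ) : d (k + 1) = (D (k + 1)).toReal := by
  unfold d D
  rw [ENNReal.tsum_toReal_eq (fun n => Dt_ne_top (k + 1) n)]
  exact tsum_congr fun n => (Dt_toReal k n).symm

lemma summable_d : Summable (fun k => d (k + 1)) :=
  (ENNReal.summable_toReal sum_D_ne_top).congr (fun k => (d_eq k).symm)

lemma tsum_d : ∑' k, d (k + 1) = ∑' n, c' n := by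
  have h1 : ∑' k, d (k + 1) = (∑' k, D (k + 1)).toReal := by
    rw [ENNReal.tsum_toReal_eq (fun k => D_ne_top k)]
    exact tsum_congr fun k => d_eq k
  rw [h1, fubini, total_C, ENNReal.toReal_ofReal (tsum_nonneg c'_nonneg)]


/-! ### The value of the total sum -/

lemma sum_c'_eq (N : ℕ) : ∑ n ∈ Finset.range (N + 1), c' n =
    2 + 2 * (harmonic N : ℝ) - 2 * (harmonic (2 * N + 1) : ℝ) := by
  induction N with
  | zero =>
    rw [Finset.sum_range_one]
    unfold c'
    rw [if_pos rfl]
    rw [show (2 * 0 + 1 : ℕ) = 0 + 1 from rfl, harmonic_succ]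
    simp [harmonic_zero]
  | succ N ih =>
    rw [Finset.sum_range_succ, ih]
    have e1 : (harmonic (N + 1) : ℝ) = (harmonic N : ℝ) + 1 / ((N : ℝ) + 1) := by
      rw [harmonic_succ]; push_cast; ring
    have e2 : (harmonic (2 * (N + 1) + 1) : ℝ) =
        (harmonic (2 * N + 1) : ℝ) + 1 / (2 * (N : ℝ) + 2) + 1 / (2 * (N : ℝ) + 3) := by
      rw [show 2 * (N + 1) + 1 = (2 * N + 1) + 1 + 1 by ring, harmonic_succ, harmonic_succ]
      push_cast; ring
    rw [e1, e2]
    unfold c'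
    rw [if_neg (Nat.succ_ne_zero N)]
    push_cast
    have h1 : (0 : ℝ) < (N : ℝ) + 1 := by positivity
    have h2 : (0 : ℝ) < 2 * (N : ℝ) + 2 := by positivity
    have h3 : (0 : ℝ) < 2 * (N : ℝ) + 3 := by positivity
    field_simp
    ring

lemma tendsto_partial :
    Tendsto (fun N : ℕ => 2 + 2 * (harmonic N : ℝ) - 2 * (harmonic (2 * N + 1) : ℝ)) atTop
      (𝓝 (2 - 2 * Real.log 2)) := by
  have h1 : Tendsto (fun N : ℕ => (harmonic N : ℝ) - Real.log N) atTop
      (𝓝 Real.eulerMascheroniConstant) := Real.tendsto_harmonic_sub_log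
  have hmono : Tendsto (fun N : ℕ => 2 * N + 1) atTop atTop :=
    tendsto_atTop_mono (fun n => by simp only [id_eq]; omega) tendsto_id
  have h2 : Tendsto (fun N : ℕ => (harmonic (2 * N + 1) : ℝ) - Real.log (2 * (N : ℝ) + 1)) atTop
      (𝓝 Real.eulerMascheroniConstant) := by
    have := h1.comp hmono
    refine this.congr fun N => ?_
    simp only [Function.comp_apply]
    push_cast
    ring_nf
  have hq : Tendsto (fun N : ℕ => (2 * (N : ℝ) + 1) / N) atTop (𝓝 2) := by
    have : Tendsto (fun N : ℕ => 2 + 1 / (N : ℝ)) atTop (𝓝 (2 + 0)) :=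
      tendsto_const_nhds.add tendsto_one_div_atTop_nhds_zero_nat
    rw [add_zero] at this
    refine this.congr' ?_
    filter_upwards [eventually_ne_atTop 0] with N hN
    have hN' : (N : ℝ) ≠ 0 := Nat.cast_ne_zero.mpr hN
    field_simp
  have h3 : Tendsto (fun N : ℕ => Real.log (2 * (N : ℝ) + 1) - Real.log N) atTop
      (𝓝 (Real.log 2)) := by
    have hlog : Tendsto (fun N : ℕ => Real.log ((2 * (N : ℝ) + 1) / N)) atTop
        (𝓝 (Real.log 2)) := ((Real.continuousAt_log two_ne_zero).tendsto.comp hq)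
    refine hlog.congr' ?_
    filter_upwards [eventually_ne_atTop 0] with N hN
    have hN' : (N : ℝ) ≠ 0 := Nat.cast_ne_zero.mpr hN
    rw [Real.log_div (by positivity) hN']
  have T := ((tendsto_const_nhds (x := (2 : ℝ)) (f := atTop (α := ℕ))).add
      ((h1.sub h2).const_mul 2)).sub (h3.const_mul 2)
  have hval : 2 + 2 * (Real.eulerMascheroniConstant - Real.eulerMascheroniConstant)
      - 2 * Real.log 2 = 2 - 2 * Real.log 2 := by ring
  rw [hval] at T
  refine T.congr fun N => ?_
  ring

lemma tsum_c'_value : ∑' n, c' n = 2 - 2 * Real.log 2 := by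
  have hA : Tendsto (fun N => ∑ n ∈ Finset.range N, c' n) atTop (𝓝 (∑' n, c' n)) :=
    summable_c'.hasSum.tendsto_sum_nat
  have hA' : Tendsto (fun N => ∑ n ∈ Finset.range (N + 1), c' n) atTop (𝓝 (∑' n, c' n)) :=
    hA.comp (tendsto_add_atTop_nat 1)
  have hB : Tendsto (fun N => ∑ n ∈ Finset.range (N + 1), c' n) atTop
      (𝓝 (2 - 2 * Real.log 2)) := tendsto_partial.congr fun N => (sum_c'_eq N).symm
  exact tendsto_nhds_unique hA' hB

lemma telescope (K : ℕ) : f (K + 1) = 2 - ∑ i ∈ Finset.range K, d (i + 1) := by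
  induction K with
  | zero => simpa using f_one
  | succ K ih =>
    rw [f_step (K + 1) (Nat.succ_ne_zero K), ih, Finset.sum_range_succ]
    ring

lemma final : Tendsto f atTop (𝓝 (2 * Real.log 2)) := by
  have hd : Tendsto (fun K => ∑ i ∈ Finset.range K, d (i + 1)) atTop
      (𝓝 (∑' k, d (k + 1))) := summable_d.hasSum.tendsto_sum_nat
  rw [tsum_d, tsum_c'_value] at hd
  have h : Tendsto (fun K => f (K + 1)) atTop (𝓝 (2 - (2 - 2 * Real.log 2))) :=
    (tendsto_const_nhds.sub hd).congr fun K => (telescope K).symm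
  rw [show (2 : ℝ) - (2 - 2 * Real.log 2) = 2 * Real.log 2 by ring] at h
  exact (tendsto_add_atTop_iff_nat 1).mp h

end Kempner

theorem kempner_limit_base_two :
    Filter.Tendsto
      (fun k : ℕ => ∑' n : ℕ, if (Nat.digits 2 n).sum = k then (1 : ℝ) / n else 0)
      Filter.atTop (nhds (2 * Real.log 2)) := by
  have h := Kempner.final
  unfold Kempner.f Kempner.a Kempner.s at h
  exact h
end

section
/- Let $P(X) = \sum_{0 \leq k \leq d} a_k X^{d-k}$ be a monic complex polynomial (so $a_0 = 1$) all of whose complex roots have modulus $< 1$. For a complex sequence $(u_n)_{n \geq 0}$, define $u^{(P)}_n = \sum_{0 \leq k \leq d} a_k u_{n-k}$ for $n \geq d$. Then $(u_n)$ tends to $0$ if and only if $(u^{(P)}_n)_{n \geq d}$ tends to $0$. -/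
open Filter Polynomial Finset

/-- If `|z| < 1` and `w (n+1) - z * w n → 0` then `w → 0`. -/
lemma aux_contract (z : ℂ) (hz : ‖z‖ < 1) (w : ℕ → ℂ)
    (h : Tendsto (fun n => w (n + 1) - z * w n) atTop (nhds 0)) :
    Tendsto w atTop (nhds 0) := by
  rw [NormedAddCommGroup.tendsto_nhds_zero] at h ⊢
  intro ε εpos
  have hz' : ‖z‖ < 1 := hz
  have hδ : 0 < ε * (1 - ‖z‖) / 2 := by
    have : 0 < 1 - ‖z‖ := by linarith
    positivity
  obtain ⟨N, hN⟩ := (eventually_atTop.1 (h _ hδ))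
  have key : ∀ m, ‖w (N + m)‖ ≤ ‖z‖ ^ m * ‖w N‖ + ε / 2 := by
    intro m
    induction m with
    | zero => simp; linarith [norm_nonneg (w N)]
    | succ m ihm =>
      have h1 : ‖w (N + m + 1) - z * w (N + m)‖ < ε * (1 - ‖z‖) / 2 :=
        hN (N + m) (Nat.le_add_right _ _)
      have h2 : ‖w (N + m + 1)‖ ≤ ‖z‖ * ‖w (N + m)‖ + ε * (1 - ‖z‖) / 2 := by
        calc ‖w (N + m + 1)‖ = ‖z * w (N + m) + (w (N + m + 1) - z * w (N + m))‖ := by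
              ring_nf
          _ ≤ ‖z * w (N + m)‖ + ‖w (N + m + 1) - z * w (N + m)‖ := norm_add_le _ _
          _ ≤ ‖z‖ * ‖w (N + m)‖ + ε * (1 - ‖z‖) / 2 := by
              rw [norm_mul]; linarith
      have hzn : (0:ℝ) ≤ ‖z‖ := norm_nonneg z
      have : ‖w (N + (m + 1))‖ = ‖w (N + m + 1)‖ := by ring_nf
      rw [this, pow_succ]
      nlinarith [ihm, norm_nonneg (w (N + m))]
  have hpow : Tendsto (fun m => ‖z‖ ^ m * ‖w N‖) atTop (nhds 0) := by
    have := (tendsto_pow_atTop_nhds_zero_of_lt_one (norm_nonneg z) hz').mul_const ‖w N‖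
    simpa using this
  obtain ⟨M, hM⟩ := eventually_atTop.1 (hpow.eventually_lt_const (half_pos εpos))
  refine eventually_atTop.2 ⟨N + M, fun n hn => ?_⟩
  have hm : n = N + (n - N) := by omega
  have h1 := key (n - N)
  rw [← hm] at h1
  have h2 : ‖z‖ ^ (n - N) * ‖w N‖ < ε / 2 := hM (n - N) (by omega)
  linarith

/-- Reverse direction by induction on the degree. -/
lemma aux_rev (d : ℕ) : ∀ (P : Polynomial ℂ), P.Monic → P.natDegree = d →
    (∀ z : ℂ, P.IsRoot z → ‖z‖ < 1) → ∀ u : ℕ → ℂ,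
    Tendsto (fun n => ∑ j ∈ Finset.range (d + 1), P.coeff j * u (n + j)) atTop (nhds 0) →
    Tendsto u atTop (nhds 0) := by
  induction d with
  | zero =>
    intro P hP hd _ u hu
    have hP1 : P = 1 := hP.natDegree_eq_zero.1 hd
    simpa [hP1] using hu
  | succ d ih =>
    intro P hP hd hroots u hu
    -- P has a root z
    have hdeg : 0 < P.degree := by
      rw [Polynomial.degree_eq_natDegree hP.ne_zero, hd]
      exact_mod_cast Nat.succ_pos d
    obtain ⟨z, hz⟩ := Complex.exists_root hdeg
    have hz1 : ‖z‖ < 1 := hroots z hz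
    set Q := P /ₘ (X - C z) with hQdef
    have hfac : (X - C z) * Q = P := (mul_divByMonic_eq_iff_isRoot).2 hz
    have hQmonic : Q.Monic := (monic_X_sub_C z).of_mul_monic_left (by rwa [hfac])
    have hQdeg : Q.natDegree = d := by
      have := Polynomial.natDegree_mul (monic_X_sub_C z).ne_zero hQmonic.ne_zero
      rw [hfac, hd, natDegree_X_sub_C] at this
      omega
    have hQroots : ∀ y : ℂ, Q.IsRoot y → ‖y‖ < 1 := by
      intro y hy
      apply hroots
      rw [IsRoot, ← hfac]
      simp [hy.eq_zero]
    set w : ℕ → ℂ := fun n => ∑ j ∈ Finset.range (d + 1), Q.coeff j * u (n + j) with hw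
    have hvw : ∀ n, (∑ j ∈ Finset.range (d + 1 + 1), P.coeff j * u (n + j))
        = w (n + 1) - z * w n := by
      intro n
      have hc : ∀ j, P.coeff j = (X * Q).coeff j - z * Q.coeff j := by
        intro j
        rw [← hfac, sub_mul, Polynomial.coeff_sub, Polynomial.coeff_C_mul]
      calc (∑ j ∈ Finset.range (d + 2), P.coeff j * u (n + j))
          = ∑ j ∈ Finset.range (d + 2), ((X * Q).coeff j * u (n + j)
              - z * (Q.coeff j * u (n + j))) := by
            refine Finset.sum_congr rfl fun j _ => ?_
            rw [hc j]; ring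
        _ = (∑ j ∈ Finset.range (d + 2), (X * Q).coeff j * u (n + j))
              - z * ∑ j ∈ Finset.range (d + 2), Q.coeff j * u (n + j) := by
            rw [Finset.sum_sub_distrib, Finset.mul_sum]
        _ = w (n + 1) - z * w n := by
            congr 1
            · rw [Finset.sum_range_succ']
              have h0 : (X * Q).coeff 0 = 0 := by simp [Polynomial.mul_coeff_zero]
              rw [h0, zero_mul, add_zero]
              refine Finset.sum_congr rfl fun i _ => ?_
              rw [Polynomial.coeff_X_mul]
              congr 2
              omega
            · congr 1
              rw [Finset.sum_range_succ]
              have : Q.coeff (d + 1) = 0 :=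
                Polynomial.coeff_eq_zero_of_natDegree_lt (by omega)
              rw [this, zero_mul, add_zero]
    have hwt : Tendsto (fun n => w (n + 1) - z * w n) atTop (nhds 0) := by
      apply hu.congr
      intro n
      exact (hvw n)
    have hw0 : Tendsto w atTop (nhds 0) := aux_contract z hz1 w hwt
    exact ih Q hQmonic hQdeg hQroots u hw0

theorem tendsto_zero_iff_poly_comb_tendsto_zero (d : ℕ) (P : Polynomial ℂ)
    (hP : P.Monic) (hd : P.natDegree = d)
    (hroots : ∀ z : ℂ, P.IsRoot z → ‖z‖ < 1) (u : ℕ → ℂ) :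
    Filter.Tendsto u Filter.atTop (nhds 0) ↔
      Filter.Tendsto
        (fun n : ℕ => ∑ k ∈ Finset.range (d + 1), P.coeff (d - k) * u (n + d - k))
        Filter.atTop (nhds 0) := by
  have hrw : (fun n : ℕ => ∑ k ∈ Finset.range (d + 1), P.coeff (d - k) * u (n + d - k))
      = fun n : ℕ => ∑ j ∈ Finset.range (d + 1), P.coeff j * u (n + j) := by
    funext n
    rw [← Finset.sum_range_reflect (fun j => P.coeff j * u (n + j)) (d + 1)]
    refine Finset.sum_congr rfl fun k hk => ?_
    have hk' : k ≤ d := by simpa [Nat.lt_succ_iff] using Finset.mem_range.1 hk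
    have h1 : d + 1 - 1 - k = d - k := by omega
    have h2 : n + d - k = n + (d - k) := by omega
    rw [h1, h2]
  rw [hrw]
  constructor
  · intro hu
    have h : Tendsto (fun n : ℕ => ∑ j ∈ Finset.range (d + 1), P.coeff j * u (n + j))
        atTop (nhds (∑ j ∈ Finset.range (d + 1), P.coeff j * (0:ℂ))) := by
      apply tendsto_finset_sum
      intro j _
      exact (hu.comp (tendsto_add_atTop_nat j)).const_mul _
    simpa using h
  · intro hv
    exact aux_rev d P hP hd hroots u hv
end

section
/- Let $b > 2$ be an integer and $P(X) = (b-1)X^{b-2} + (b-2)X^{b-3} + \cdots + 2X + 1$. Then every complex root of $P$ has modulus strictly less than $1$. -/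
lemma key_identity (z : ℂ) (n : ℕ) :
    (1 - z) * ∑ j ∈ Finset.range n, ((j : ℂ) + 1) * z ^ j
      = (∑ j ∈ Finset.range n, z ^ j) - n * z ^ n := by
  induction n with
  | zero => simp
  | succ n ih =>
    rw [Finset.sum_range_succ, Finset.sum_range_succ, mul_add, ih]
    push_cast
    ring

lemma abs_one_re_one (w : ℂ) (h1 : ‖w‖ = 1) (h2 : w.re = 1) : w = 1 := by
  have hsq := Complex.sq_norm w
  rw [h1, Complex.normSq_apply, h2] at hsq
  have him : w.im = 0 := by nlinarith [sq_nonneg w.im]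
  exact Complex.ext h2 him

theorem roots_modulus_lt_one (b : ℕ) (hb : 2 < b) (z : ℂ)
    (hz : ∑ j ∈ Finset.range (b - 1), ((j : ℂ) + 1) * z ^ j = 0) :
    ‖z‖ < 1 := by
  set n := b - 1 with hn
  have hn2 : 2 ≤ n := by omega
  have hn1 : 1 ≤ n := by omega
  -- z ≠ 1
  have hz1 : z ≠ 1 := by
    intro h
    subst h
    simp only [one_pow, mul_one] at hz
    have : ((∑ j ∈ Finset.range n, (j + 1) : ℕ) : ℂ) = 0 := by
      push_cast
      exact hz
    rw [Nat.cast_eq_zero] at this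
    have h0 : 0 ∈ Finset.range n := by simp; omega
    have := (Finset.sum_eq_zero_iff.mp this) 0 h0
    omega
  have h1 : ∑ j ∈ Finset.range n, z ^ j = n * z ^ n := by
    have hk := key_identity z n
    rw [hz, mul_zero] at hk
    linear_combination -hk
  by_contra hcon
  push_neg at hcon
  -- Stage 1: |z| = 1
  have habs : ‖z‖ = 1 := by
    have hle : (n : ℝ) * ‖z‖ ^ n ≤ n * ‖z‖ ^ (n - 1) := by
      calc (n : ℝ) * ‖z‖ ^ n
          = ‖(n : ℂ) * z ^ n‖ := by
            rw [norm_mul, norm_pow, Complex.norm_natCast]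
        _ = ‖∑ j ∈ Finset.range n, z ^ j‖ := by rw [h1]
        _ ≤ ∑ j ∈ Finset.range n, ‖z ^ j‖ := by
            simpa using
              norm_sum_le (Finset.range n) (fun j => z ^ j)
        _ ≤ ∑ j ∈ Finset.range n, ‖z‖ ^ (n - 1) := by
            apply Finset.sum_le_sum
            intro j hj
            rw [norm_pow]
            exact pow_le_pow_right₀ hcon (by simp at hj; omega)
        _ = n * ‖z‖ ^ (n - 1) := by
            rw [Finset.sum_const, Finset.card_range, nsmul_eq_mul]
    have hpow : ‖z‖ ^ n = ‖z‖ ^ (n - 1) * ‖z‖ := by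
      rw [← pow_succ]
      congr 1
      omega
    have hp : (0:ℝ) < ‖z‖ ^ (n - 1) := pow_pos (lt_of_lt_of_le one_pos hcon) _
    have hnpos : (0:ℝ) < n := by positivity
    nlinarith [mul_pos hnpos hp]
  -- Stage 2: equality case forces z = 1
  exfalso
  set w := (starRingEnd ℂ) (z ^ n) with hw
  have hwabs : ‖w‖ = 1 := by
    rw [hw, map_pow]
    simp [habs]
  have hsum : ∑ j ∈ Finset.range n, (w * z ^ j).re = n := by
    have : ∑ j ∈ Finset.range n, (w * z ^ j) = w * ∑ j ∈ Finset.range n, z ^ j := by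
      rw [Finset.mul_sum]
    have hns : (starRingEnd ℂ) (z ^ n) * z ^ n = 1 := by
      rw [mul_comm, Complex.mul_conj, Complex.normSq_eq_norm_sq, norm_pow, habs]
      simp
    have h2 : ∑ j ∈ Finset.range n, (w * z ^ j) = (n : ℂ) := by
      rw [this, h1, hw]
      linear_combination (n : ℂ) * hns
    rw [← Complex.re_sum, h2]
    simp
  have hle : ∀ j ∈ Finset.range n, (w * z ^ j).re ≤ 1 := by
    intro j hj
    have := Complex.re_le_norm (w * z ^ j)
    rw [norm_mul, hwabs, norm_pow, habs, one_pow, one_mul] at this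
    exact this
  have heq : ∀ j ∈ Finset.range n, (w * z ^ j).re = 1 := by
    have hsum1 : ∑ j ∈ Finset.range n, (1:ℝ) = n := by simp
    exact (Finset.sum_eq_sum_iff_of_le hle).mp (by rw [hsum, hsum1])
  have h0 : w.re = 1 := by
    have := heq 0 (by simp; omega)
    simpa using this
  have hweq : w = 1 := abs_one_re_one w hwabs h0
  have hz1' : (w * z).re = 1 := by
    have := heq 1 (by simp; omega)
    simpa using this
  rw [hweq, one_mul] at hz1'
  exact hz1 (abs_one_re_one z habs hz1')
end

section
/- Let $b \geq 2$ be an integer, $\ell$ a real number, and $(u_n)$ a real sequence. If $\lim_{n \to \infty} \big((b-1)u_n + (b-2)u_{n-1} + \cdots + 2 u_{n-b+3} + u_{n-b+2}\big) = \ell$, then $\lim_{n \to \infty} u_n = \frac{2\ell}{b(b-1)}$. -/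
open Filter Finset

lemma key_upper (p : ℕ) (hp : 1 ≤ p) (v G : ℕ → ℝ)
    (hG : ∀ n, G n = ∑ k ∈ Finset.range p, ((k + 1 : ℕ) : ℝ) * v (n + k))
    (hG0 : Filter.Tendsto G Filter.atTop (nhds 0)) :
    ∀ ε > 0, ∀ᶠ n in Filter.atTop, v n ≤ ε := by
  have hne : (Finset.range p).Nonempty := Finset.nonempty_range_iff.mpr (by omega)
  have hppos : (0:ℝ) < (p:ℝ) := by exact_mod_cast hp
  have hp1 : (1:ℝ) ≤ (p:ℝ) := by exact_mod_cast hp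
  set T : ℕ → ℝ := fun n => (Finset.range p).sup' hne (fun k => v (n + k)) with hT
  have hvT : ∀ n k, k < p → v (n + k) ≤ T n := fun n k hk =>
    Finset.le_sup' (fun k => v (n + k)) (Finset.mem_range.mpr hk)
  -- the recurrence
  have hrec : ∀ n, (p:ℝ) * v (n + p) =
      G (n+1) - G n + ∑ k ∈ Finset.range p, v (n + k) := by
    intro n
    have e1 : ∑ k ∈ Finset.range (p+1), ((k:ℕ):ℝ) * v (n + k)
        = ∑ k ∈ Finset.range p, ((k + 1 : ℕ) : ℝ) * v (n + 1 + k) := by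
      rw [Finset.sum_range_succ' (fun k => ((k:ℕ):ℝ) * v (n + k)) p]
      norm_num
      apply Finset.sum_congr rfl
      intro k _
      rw [show n + (k + 1) = n + 1 + k by omega]
    have e2 : ∑ k ∈ Finset.range (p+1), ((k:ℕ):ℝ) * v (n + k)
        = ∑ k ∈ Finset.range p, ((k:ℕ):ℝ) * v (n + k) + (p:ℝ) * v (n + p) :=
      Finset.sum_range_succ _ p
    have e4 : ∑ k ∈ Finset.range p, ((k + 1 : ℕ):ℝ) * v (n + k)
        = ∑ k ∈ Finset.range p, ((k:ℕ):ℝ) * v (n + k)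
          + ∑ k ∈ Finset.range p, v (n + k) := by
      rw [← Finset.sum_add_distrib]
      apply Finset.sum_congr rfl
      intro k _
      push_cast
      ring
    rw [hG (n+1), hG n, e4]
    linarith [e1, e2]
  intro ε hε
  set ε' := ε / 4 with hε'def
  have hε' : 0 < ε' := by positivity
  obtain ⟨N, hN⟩ : ∃ N, ∀ n ≥ N, |G n| ≤ ε' := by
    obtain ⟨N, hN⟩ := (Metric.tendsto_atTop.mp hG0) ε' hε'
    refine ⟨N, fun n hn => ?_⟩
    have := hN n hn
    rw [Real.dist_eq, sub_zero] at this
    linarith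
  -- min of window is ≤ ε'
  have hminbd : ∀ n, N ≤ n → ∃ k₀, k₀ < p ∧ (∀ k, k < p → v (n + k₀) ≤ v (n + k))
      ∧ v (n + k₀) ≤ ε' := by
    intro n hn
    obtain ⟨k₀, hk₀mem, hk₀min⟩ :=
      Finset.exists_min_image (Finset.range p) (fun k => v (n + k)) hne
    refine ⟨k₀, Finset.mem_range.mp hk₀mem, fun k hk => hk₀min k (Finset.mem_range.mpr hk), ?_⟩
    by_contra hcon
    push_neg at hcon
    have hbig : ∀ k ∈ Finset.range p, ε' < ((k + 1 : ℕ):ℝ) * v (n + k) := by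
      intro k hk
      have h1 : ε' < v (n + k) := lt_of_lt_of_le hcon (hk₀min k hk)
      have h2 : (1:ℝ) ≤ ((k + 1 : ℕ):ℝ) := by exact_mod_cast Nat.one_le_iff_ne_zero.mpr (by omega)
      nlinarith
    have hlt : ∑ _k ∈ Finset.range p, ε' < ∑ k ∈ Finset.range p, ((k + 1 : ℕ):ℝ) * v (n + k) :=
      Finset.sum_lt_sum_of_nonempty hne hbig
    rw [Finset.sum_const, Finset.card_range, nsmul_eq_mul] at hlt
    have hGn : G n ≤ ε' := (abs_le.mp (hN n hn)).2
    rw [← hG n] at hlt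
    nlinarith
  -- window sum bound
  have hstep : ∀ n, N ≤ n → v (n + p) ≤ (((p:ℝ) - 1) * T n + 3 * ε') / (p:ℝ) := by
    intro n hn
    obtain ⟨k₀, hk₀p, hk₀min, hk₀le⟩ := hminbd n hn
    have hmem : k₀ ∈ Finset.range p := Finset.mem_range.mpr hk₀p
    have hsum : ∑ k ∈ Finset.range p, v (n + k)
        = v (n + k₀) + ∑ k ∈ (Finset.range p).erase k₀, v (n + k) := by
      exact (Finset.add_sum_erase _ (fun k => v (n + k)) hmem).symm
    have hrest : ∑ k ∈ (Finset.range p).erase k₀, v (n + k)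
        ≤ (((Finset.range p).erase k₀).card : ℝ) * T n := by
      have := Finset.sum_le_card_nsmul ((Finset.range p).erase k₀)
        (fun k => v (n + k)) (T n)
        (fun k hk => hvT n k (Finset.mem_range.mp (Finset.mem_of_mem_erase hk)))
      simpa [nsmul_eq_mul] using this
    have hcard : (((Finset.range p).erase k₀).card : ℝ) = (p:ℝ) - 1 := by
      rw [Finset.card_erase_of_mem hmem, Finset.card_range]
      have : 1 ≤ p := hp
      push_cast [Nat.cast_sub this]
      ring
    rw [hcard] at hrest
    have hΔ : G (n+1) - G n ≤ 2 * ε' := by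
      have h1 := abs_le.mp (hN n hn)
      have h2 := abs_le.mp (hN (n+1) (by omega))
      linarith
    have := hrec n
    rw [le_div_iff₀ hppos]
    nlinarith
  set M₀ := max (T N) (3 * ε') with hM₀
  -- absorbing bound
  have hA : ∀ n, N ≤ n → T n ≤ M₀ := by
    intro n hn
    induction n, hn using Nat.le_induction with
    | base => exact le_max_left _ _
    | succ n hn ih =>
      apply Finset.sup'_le
      intro k hk
      have hkp : k < p := Finset.mem_range.mp hk
      rcases Nat.lt_or_ge (k+1) p with hlt | hge
      · rw [show n + 1 + k = n + (k+1) by omega]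
        exact le_trans (hvT n (k+1) hlt) ih
      · have hkp1 : k + 1 = p := by omega
        rw [show n + 1 + k = n + p by omega]
        refine le_trans (hstep n hn) ?_
        rw [div_le_iff₀ hppos]
        have h3 : 3 * ε' ≤ M₀ := le_max_right _ _
        nlinarith [mul_le_mul_of_nonneg_left ih (show (0:ℝ) ≤ (p:ℝ) - 1 by linarith)]
  set θ : ℝ := ((p:ℝ) - 1) / (p:ℝ) with hθdef
  have hθ0 : 0 ≤ θ := by
    apply div_nonneg <;> linarith
  have hθ1 : θ < 1 := by
    rw [div_lt_one hppos]; linarith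
  -- geometric decay
  have hB : ∀ j, ∀ n, N + j * p ≤ n → T n ≤ 3 * ε' + θ ^ j * (M₀ - 3 * ε') := by
    intro j
    induction j with
    | zero =>
      intro n hn
      have := hA n (by omega)
      simpa using this
    | succ j ih =>
      intro n hn
      have hpn : p ≤ n := by
        refine le_trans ?_ (le_trans (Nat.le_add_left _ N) hn)
        exact Nat.le_mul_of_pos_left p (by omega)
      obtain ⟨m, rfl⟩ : ∃ m, n = m + p := ⟨n - p, (Nat.sub_add_cancel hpn).symm⟩
      apply Finset.sup'_le
      intro k hk
      have hkp : k < p := Finset.mem_range.mp hk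
      have hm0 : N + j * p ≤ m := by
        have h2 : N + j * p + p ≤ m + p := by
          have he : N + (j + 1) * p = N + j * p + p := by ring
          rw [← he]; exact hn
        exact Nat.le_of_add_le_add_right h2
      have hm : N + j * p ≤ m + k := le_trans hm0 (Nat.le_add_right m k)
      have hNmk : N ≤ m + k := le_trans (Nat.le_add_right N (j * p)) hm
      rw [show m + p + k = (m + k) + p by omega]
      refine le_trans (hstep (m + k) hNmk) ?_
      have ihk := ih (m+k) hm
      rw [div_le_iff₀ hppos]
      have hθp : θ ^ (j+1) * (p:ℝ) = θ ^ j * ((p:ℝ) - 1) := by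
        rw [pow_succ, hθdef]
        field_simp
      have hθpD := congrArg (fun x => x * (M₀ - 3 * ε')) hθp
      nlinarith [mul_le_mul_of_nonneg_left ihk (show (0:ℝ) ≤ (p:ℝ) - 1 by linarith), hθpD]
  -- choose j large
  have hD : 0 ≤ M₀ - 3 * ε' := by
    have := le_max_right (T N) (3 * ε')
    linarith
  have htend : Filter.Tendsto (fun j => θ ^ j) Filter.atTop (nhds 0) :=
    tendsto_pow_atTop_nhds_zero_of_lt_one hθ0 hθ1
  obtain ⟨j, hj⟩ : ∃ j, θ ^ j * (M₀ - 3 * ε') ≤ ε' := by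
    have hpos : 0 < ε' / (M₀ - 3 * ε' + 1) := by positivity
    obtain ⟨j, hj⟩ := (Metric.tendsto_atTop.mp htend) _ hpos
    refine ⟨j, ?_⟩
    have := hj j le_rfl
    rw [Real.dist_eq, sub_zero] at this
    have h1 : θ ^ j < ε' / (M₀ - 3 * ε' + 1) := lt_of_abs_lt this
    have h2 : 0 ≤ θ ^ j := pow_nonneg hθ0 j
    have h3 : 0 < M₀ - 3 * ε' + 1 := by linarith
    have h4 : θ ^ j * (M₀ - 3 * ε' + 1) < ε' := by
      rw [← lt_div_iff₀ h3]; exact h1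
    nlinarith
  refine Filter.eventually_atTop.mpr ⟨N + j * p, fun n hn => ?_⟩
  have hTn := hB j n hn
  have hvn : v n ≤ T n := by simpa using hvT n 0 (by omega)
  have : v n ≤ 3 * ε' + ε' := by linarith
  rw [hε'def] at this
  linarith

theorem tendsto_of_weighted_comb_tendsto (b : ℕ) (hb : 2 ≤ b) (ℓ : ℝ) (u : ℕ → ℝ)
    (h : Filter.Tendsto
      (fun n : ℕ => ∑ i ∈ Finset.range (b - 1), ((b - 1 - i : ℕ) : ℝ) * u (n - i))
      Filter.atTop (nhds ℓ)) :
    Filter.Tendsto u Filter.atTop (nhds (2 * ℓ / (b * (b - 1)))) := by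
  set p := b - 1 with hpdef
  have hp : 1 ≤ p := by omega
  set c : ℝ := 2 * ℓ / (b * (b - 1)) with hc
  have hbR : (2:ℝ) ≤ (b:ℝ) := by exact_mod_cast hb
  have hb0 : (b:ℝ) ≠ 0 := by linarith
  have hb1 : (b:ℝ) - 1 ≠ 0 := by intro hcon; linarith
  set v : ℕ → ℝ := fun n => u n - c with hv
  -- sum of coefficients
  have hSnat : (∑ k ∈ Finset.range p, (k + 1)) * 2 = (p + 1) * p := by
    have h1 : ∑ i ∈ Finset.range (p+1), i = ∑ k ∈ Finset.range p, (k + 1) := by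
      rw [Finset.sum_range_succ' (fun i => i) p]
      simp
    rw [← h1]
    exact Finset.sum_range_id_mul_two (p+1)
  have hpcast : ((p:ℕ):ℝ) = (b:ℝ) - 1 := by
    rw [hpdef]
    push_cast [Nat.cast_sub (by omega : 1 ≤ b)]
    ring
  have hScast : (∑ k ∈ Finset.range p, ((k + 1 : ℕ):ℝ)) * 2 = (b:ℝ) * ((b:ℝ) - 1) := by
    have hh := congrArg (fun x : ℕ => (x : ℝ)) hSnat
    push_cast at hh ⊢
    rw [hpcast] at hh
    linear_combination hh
  have hcoef : (∑ k ∈ Finset.range p, ((k + 1 : ℕ):ℝ)) * c = ℓ := by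
    have hS : (∑ k ∈ Finset.range p, ((k + 1 : ℕ):ℝ)) = (b:ℝ) * ((b:ℝ) - 1) / 2 := by
      linarith
    rw [hS, hc]
    field_simp
  set G : ℕ → ℝ := fun n =>
    (∑ i ∈ Finset.range p, ((p - i : ℕ) : ℝ) * u (n + (p - 1) - i)) - ℓ with hGdef
  have hG0 : Filter.Tendsto G Filter.atTop (nhds 0) := by
    have h1 := h.comp (Filter.tendsto_add_atTop_nat (p - 1))
    have h2 := h1.sub_const ℓ
    simpa [hGdef, Function.comp, sub_self] using h2
  have hG : ∀ n, G n = ∑ k ∈ Finset.range p, ((k + 1 : ℕ) : ℝ) * v (n + k) := by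
    intro n
    show (∑ i ∈ Finset.range p, ((p - i : ℕ) : ℝ) * u (n + (p - 1) - i)) - ℓ
        = ∑ k ∈ Finset.range p, ((k + 1 : ℕ) : ℝ) * v (n + k)
    have hreflect : ∑ i ∈ Finset.range p, ((p - i : ℕ) : ℝ) * u (n + (p - 1) - i)
        = ∑ k ∈ Finset.range p, ((k + 1 : ℕ) : ℝ) * u (n + k) := by
      rw [← Finset.sum_range_reflect (fun k => ((k + 1 : ℕ) : ℝ) * u (n + k)) p]
      apply Finset.sum_congr rfl
      intro i hi
      have hip : i < p := Finset.mem_range.mp hi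
      congr 2
      · omega
      · omega
    have hsplit : ∑ k ∈ Finset.range p, ((k + 1 : ℕ) : ℝ) * v (n + k)
        = ∑ k ∈ Finset.range p, ((k + 1 : ℕ) : ℝ) * u (n + k)
          - (∑ k ∈ Finset.range p, ((k + 1 : ℕ):ℝ)) * c := by
      rw [Finset.sum_mul, ← Finset.sum_sub_distrib]
      apply Finset.sum_congr rfl
      intro k _
      rw [hv]
      ring
    rw [hreflect, hsplit, hcoef]
  have key1 := key_upper p hp v G hG hG0
  have key2 := key_upper p hp (fun n => -v n) (fun n => -G n)
    (by
      intro n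
      show -G n = _
      rw [hG n, ← Finset.sum_neg_distrib]
      apply Finset.sum_congr rfl
      intro k _
      ring)
    (by simpa using hG0.neg)
  have hv0 : Filter.Tendsto v Filter.atTop (nhds 0) := by
    rw [NormedAddCommGroup.tendsto_nhds_zero]
    intro ε hε
    have hε2 : 0 < ε / 2 := by positivity
    filter_upwards [key1 (ε/2) hε2, key2 (ε/2) hε2] with n h1 h2
    have h2' : -v n ≤ ε / 2 := h2
    have h3 : -(ε / 2) ≤ v n := by linarith
    rw [Real.norm_eq_abs]
    have h4 : |v n| ≤ ε / 2 := abs_le.mpr ⟨h3, h1⟩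
    linarith
  have := hv0.add_const c
  simp only [hv, zero_add, sub_add_cancel] at this
  exact this
end

section
/- For integers $b \geq 2$ and $k \geq 1$, the series $\sum_{n \geq 1,\ s_b(n) = k} \frac{1}{n}$ converges. -/
lemma aux_list (b : ℕ) : ∀ L : List ℕ, ∃ E : List ℕ, E.length = L.sum ∧
    (∀ x ∈ E, x < L.length) ∧ (E.map (b ^ ·)).sum = Nat.ofDigits b L := by
  intro L
  induction L with
  | nil => exact ⟨[], by simp, by simp, by simp⟩
  | cons d T ih =>
    obtain ⟨E, h1, h2, h3⟩ := ih
    refine ⟨List.replicate d 0 ++ E.map (· + 1), by simp [h1], ?_, ?_⟩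
    · intro x hx
      rcases List.mem_append.1 hx with h | h
      · have := List.eq_of_mem_replicate h
        simp [this]
      · obtain ⟨y, hy, rfl⟩ := List.mem_map.1 h
        simpa using h2 y hy
    · rw [Nat.ofDigits_cons, ← h3]
      simp only [List.map_append, List.map_replicate, List.sum_append, List.sum_replicate,
        List.map_map, pow_zero, smul_eq_mul, mul_one]
      congr 1
      have : ((fun x => b ^ x) ∘ fun x => x + 1) = fun x => b * b ^ x := by
        funext x; simp [pow_succ, mul_comm]
      rw [this, ← List.sum_map_mul_left]

lemma digits_len_le_of_lt_pow {b m n : ℕ} (hb : 2 ≤ b) (hn : n < b ^ m) :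
    (Nat.digits b n).length ≤ m := by
  rcases eq_or_ne n 0 with rfl | h0
  · simp
  by_contra h
  push_neg at h
  have h1 : b ^ (m + 1) ≤ b ^ (Nat.digits b n).length := Nat.pow_le_pow_right (by omega) h
  have h2 : b ^ (Nat.digits b n).length ≤ b * n := Nat.base_pow_length_digits_le b n (by omega) h0
  have h3 : b * b ^ m ≤ b ^ (m + 1) := by rw [pow_succ, mul_comm]
  have h4 : b * (b ^ m) ≤ b * n := by omega
  have := Nat.le_of_mul_le_mul_left h4 (by omega)
  omega

lemma card_bound (b k m : ℕ) (hb : 2 ≤ b) (hk : 1 ≤ k) :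
    ((Finset.range (b ^ m)).filter (fun n => (Nat.digits b n).sum = k)).card ≤ m ^ k := by
  have := Finset.card_le_card_of_surjOn
    (s := (Finset.univ : Finset (Fin k → Fin m)))
    (t := (Finset.range (b ^ m)).filter (fun n => (Nat.digits b n).sum = k))
    (fun g => ∑ j, b ^ (g j : ℕ)) ?_
  · simpa [Fintype.card_fun] using this
  · intro n hn
    simp only [Finset.coe_filter, Set.mem_setOf_eq, Finset.mem_range] at hn
    obtain ⟨hlt, hsum⟩ := hn
    obtain ⟨E, h1, h2, h3⟩ := aux_list b (Nat.digits b n)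
    rw [hsum] at h1
    rw [Nat.ofDigits_digits] at h3
    have hlm : (Nat.digits b n).length ≤ m := digits_len_le_of_lt_pow hb hlt
    subst h1
    refine ⟨fun j => ⟨E[(j : ℕ)], lt_of_lt_of_le (h2 _ (E.getElem_mem _)) hlm⟩, Finset.mem_coe.2 (Finset.mem_univ _), ?_⟩
    simp only
    refine Eq.trans ?_ h3
    rw [← List.ofFn_getElem_eq_map E (b ^ ·), List.sum_ofFn]

theorem kempner_sb_summable (b k : ℕ) (hb : 2 ≤ b) (hk : 1 ≤ k) :
    Summable (fun n : ℕ => if (Nat.digits b n).sum = k then (1 : ℝ) / n else 0) := by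
  set f : ℕ → ℝ := fun n : ℕ => if (Nat.digits b n).sum = k then (1 : ℝ) / n else 0 with hf
  have hb1 : (1 : ℝ) < b := by exact_mod_cast (by omega : 1 < b)
  have hbpos : (0 : ℝ) < b := by linarith
  have hfnonneg : ∀ n, 0 ≤ f n := by
    intro n
    simp only [hf]
    split <;> positivity
  -- the dominating sequence
  set g : ℕ → ℝ := fun m : ℕ => ((m : ℝ) + 1) ^ k * (1 / b) ^ m with hg
  have hr : ‖(1 : ℝ) / b‖ < 1 := by
    rw [Real.norm_eq_abs, abs_of_pos (by positivity), div_lt_one hbpos]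
    exact hb1
  have hsum : Summable g := by
    have h1 : Summable (fun n : ℕ => (n : ℝ) ^ k * (1 / b) ^ n) :=
      summable_pow_mul_geometric_of_norm_lt_one (R := ℝ) k (r := 1/b) hr
    have h2 : Summable (fun n : ℕ => (n : ℝ) ^ k * (1 / b) ^ n * b) := h1.mul_right (b : ℝ)
    have h3 : Summable (fun n : ℕ => ((n + 1 : ℕ) : ℝ) ^ k * (1 / b) ^ (n + 1) * b) :=
      (summable_nat_add_iff (f := fun n : ℕ => (n : ℝ) ^ k * (1 / b) ^ n * b) 1).2 h2
    refine h3.congr fun n => ?_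
    push_cast
    have hbne : (b : ℝ) ≠ 0 := ne_of_gt hbpos
    have hx : ((1 : ℝ)/b) ^ (n + 1) * b = (1/b) ^ n := by
      rw [pow_succ, mul_assoc, one_div, inv_mul_cancel₀ hbne, mul_one]
    rw [mul_assoc, hx]
  have hgnonneg : ∀ m, 0 ≤ g m := fun m => by positivity
  -- block bound
  have block : ∀ M : ℕ, ∑ n ∈ Finset.Ico (b ^ M) (b ^ (M + 1)), f n ≤ g M := by
    intro M
    have : ∑ n ∈ Finset.Ico (b ^ M) (b ^ (M + 1)), f n
        = ∑ n ∈ (Finset.Ico (b ^ M) (b ^ (M + 1))).filter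
            (fun n => (Nat.digits b n).sum = k), (1 : ℝ) / n := by
      rw [Finset.sum_filter]
    rw [this]
    have hcard : ((Finset.Ico (b ^ M) (b ^ (M + 1))).filter
        (fun n => (Nat.digits b n).sum = k)).card ≤ (M + 1) ^ k := by
      refine le_trans (Finset.card_le_card ?_) (card_bound b k (M + 1) hb hk)
      intro x hx
      simp only [Finset.mem_filter, Finset.mem_Ico, Finset.mem_range] at hx ⊢
      exact ⟨hx.1.2, hx.2⟩
    have hterm : ∀ n ∈ (Finset.Ico (b ^ M) (b ^ (M + 1))).filter
        (fun n => (Nat.digits b n).sum = k), (1 : ℝ) / n ≤ (1 / b) ^ M := by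
      intro n hn
      simp only [Finset.mem_filter, Finset.mem_Ico] at hn
      have hn1 : (b : ℝ) ^ M ≤ (n : ℝ) := by exact_mod_cast hn.1.1
      have hbM : (0 : ℝ) < (b : ℝ) ^ M := by positivity
      rw [div_pow, one_pow]
      exact one_div_le_one_div_of_le hbM hn1
    calc ∑ n ∈ (Finset.Ico (b ^ M) (b ^ (M + 1))).filter
          (fun n => (Nat.digits b n).sum = k), (1 : ℝ) / n
        ≤ ((Finset.Ico (b ^ M) (b ^ (M + 1))).filter
          (fun n => (Nat.digits b n).sum = k)).card • ((1 : ℝ) / b) ^ M :=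
          Finset.sum_le_card_nsmul _ _ _ hterm
      _ ≤ ((M + 1) ^ k : ℕ) • ((1 : ℝ) / b) ^ M := by
          apply nsmul_le_nsmul_left (by positivity) hcard
      _ = g M := by
          rw [nsmul_eq_mul]
          push_cast
          ring
  -- partial sums over range (b ^ M)
  have key : ∀ M : ℕ, ∑ n ∈ Finset.range (b ^ M), f n ≤ ∑ m ∈ Finset.range M, g m := by
    intro M
    induction M with
    | zero =>
      simp only [pow_zero, Finset.range_one, Finset.sum_singleton, Finset.range_zero,
        Finset.sum_empty]
      simp only [hf, Nat.digits_zero, List.sum_nil]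
      rw [if_neg (by omega)]
    | succ M ih =>
      have hle : b ^ M ≤ b ^ (M + 1) := Nat.pow_le_pow_right (by omega) (by omega)
      rw [Finset.sum_range_succ]
      rw [Finset.range_eq_Ico, ← Finset.sum_Ico_consecutive f (Nat.zero_le _) hle,
        ← Finset.range_eq_Ico]
      exact add_le_add ih (block M)
  -- conclude
  apply summable_of_sum_range_le (c := ∑' m, g m) hfnonneg
  intro N
  have hNle : N ≤ b ^ N := Nat.le_of_lt (Nat.lt_pow_self (by omega : 1 < b))
  calc ∑ n ∈ Finset.range N, f n
      ≤ ∑ n ∈ Finset.range (b ^ N), f n := by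
        apply Finset.sum_le_sum_of_subset_of_nonneg
        · exact Finset.range_subset_range.2 hNle
        · intro i _ _; exact hfnonneg i
    _ ≤ ∑ m ∈ Finset.range N, g m := key N
    _ ≤ ∑' m, g m := Summable.sum_le_tsum _ (fun m _ => hgnonneg m) hsum
end

section
/- Let $b \geq 2$ and $s_b(n)$ the base-$b$ digit sum. Then $\lim_{k \to \infty} \sum_{n \geq 1,\ 1 \leq s_b(n) \leq k} \left(\sum_{0 \leq j \leq b-1} \frac{1}{bn+j} - \frac{1}{n}\right) = \log b - H_{b-1}$. -/
open Filter Finset Real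

private lemma digitsum_pos {b n : ℕ} (hn : n ≠ 0) : 1 ≤ (Nat.digits b n).sum := by
  have hne : Nat.digits b n ≠ [] := Nat.digits_ne_nil_iff_ne_zero.mpr hn
  have hlast := Nat.getLast_digit_ne_zero b hn
  have hmem := List.getLast_mem hne
  have := List.single_le_sum (l := Nat.digits b n) (fun x _ => Nat.zero_le x) _ hmem
  omega

private lemma u_abs_le {b : ℕ} (hb : 2 ≤ b) {n : ℕ} (hn : n ≠ 0) :
    |(∑ j ∈ Finset.range b, (1 : ℝ) / (b * n + j)) - 1 / n| ≤ (b:ℝ) * (1 / (n:ℝ)^2) := by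
  have hbR : (2:ℝ) ≤ b := by exact_mod_cast hb
  have hn1 : (1:ℝ) ≤ n := by exact_mod_cast Nat.one_le_iff_ne_zero.mpr hn
  have hx : (0:ℝ) < (b:ℝ) * n := by nlinarith
  have hrw : (1:ℝ)/n = ∑ _j ∈ range b, 1/((b:ℝ)*n) := by
    rw [Finset.sum_const, Finset.card_range, nsmul_eq_mul]
    field_simp
  rw [hrw, ← Finset.sum_sub_distrib]
  refine (Finset.abs_sum_le_sum_abs _ _).trans ?_
  have key : ∀ j ∈ range b, |(1:ℝ)/((b:ℝ)*n + j) - 1/((b:ℝ)*n)| ≤ 1/(n:ℝ)^2 := by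
    intro j hj
    have hjb : (j:ℝ) ≤ b := by
      have := Finset.mem_range.mp hj; exact_mod_cast this.le
    have hj0 : (0:ℝ) ≤ j := Nat.cast_nonneg j
    have hxj : (0:ℝ) < (b:ℝ)*n + j := by linarith
    rw [abs_sub_comm, abs_of_nonneg]
    · rw [div_sub_div _ _ hx.ne' hxj.ne', div_le_div_iff₀ (by positivity) (by positivity)]
      have h1 : (n:ℝ)^2*j ≤ (n:ℝ)^2*b := by nlinarith [sq_nonneg (n:ℝ)]
      have hb2 : (b:ℝ) ≤ (b:ℝ)^2 := by nlinarith
      have h2 : (n:ℝ)^2*(b:ℝ) ≤ (b:ℝ)^2*(n:ℝ)^2 := by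
        nlinarith [mul_le_mul_of_nonneg_left hb2 (sq_nonneg (n:ℝ))]
      nlinarith [mul_nonneg hx.le hj0]
    · rw [sub_nonneg]
      exact one_div_le_one_div_of_le hx (by linarith)
  calc ∑ j ∈ range b, |(1:ℝ)/((b:ℝ)*n + j) - 1/((b:ℝ)*n)|
      ≤ ∑ _j ∈ range b, 1/(n:ℝ)^2 := Finset.sum_le_sum key
    _ = (b:ℝ) * (1/(n:ℝ)^2) := by rw [Finset.sum_const, Finset.card_range, nsmul_eq_mul]

private lemma sum_reindex {b : ℕ} : ∀ N : ℕ,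
    ∑ n ∈ range N, ∑ j ∈ range b, (1 : ℝ) / (b * n + j) = ∑ m ∈ range (b * N), (1:ℝ) / m := by
  intro N
  induction N with
  | zero => simp
  | succ N ih =>
    rw [Finset.sum_range_succ, ih, Nat.mul_succ, Finset.sum_range_add]
    congr 1
    apply Finset.sum_congr rfl
    intro j hj
    push_cast
    ring_nf

private lemma sum_one_div_eq (M : ℕ) : ∑ m ∈ range M, (1:ℝ)/m = (harmonic M : ℝ) - 1/M := by
  have h2 : (harmonic M : ℝ) = ∑ i ∈ range M, (1:ℝ)/((i:ℝ)+1) := by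
    rw [harmonic]; push_cast; simp [one_div]
  have h1 : ∑ m ∈ range (M+1), (1:ℝ)/m = ∑ i ∈ range M, (1:ℝ)/((i:ℝ)+1) := by
    rw [Finset.sum_range_succ']
    push_cast
    simp
  rw [Finset.sum_range_succ] at h1
  linarith [h1, h2.symm]

theorem tendsto_sum_v_restricted (b : ℕ) (hb : 2 ≤ b) :
    Filter.Tendsto
      (fun k : ℕ => ∑' n : ℕ,
        if 1 ≤ (Nat.digits b n).sum ∧ (Nat.digits b n).sum ≤ k then
          (∑ j ∈ Finset.range b, (1 : ℝ) / (b * n + j)) - 1 / n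
        else 0)
      Filter.atTop
      (nhds (Real.log b - ∑ i ∈ Finset.range (b - 1), (1 : ℝ) / (i + 1))) := by
  have hb0 : 0 < b := by omega
  have hbR : (2:ℝ) ≤ b := by exact_mod_cast hb
  set H : ℝ := ∑ i ∈ Finset.range (b - 1), (1 : ℝ) / (i + 1) with hH
  set f : ℕ → ℝ := fun n =>
    if n = 0 then 0 else (∑ j ∈ Finset.range b, (1 : ℝ) / (b * n + j)) - 1 / n with hf
  have hfb : ∀ n : ℕ, |f n| ≤ (b:ℝ) * (1 / (n:ℝ)^2) := by
    intro n
    by_cases hn : n = 0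
    · simp [hf, hn]
    · simp only [hf, if_neg hn]
      exact u_abs_le hb hn
  have hsumbound : Summable (fun n : ℕ => (b:ℝ) * (1 / (n:ℝ)^2)) :=
    (summable_one_div_nat_pow.mpr one_lt_two).mul_left _
  have hnormf : Summable (fun n : ℕ => ‖f n‖) :=
    hsumbound.of_nonneg_of_le (fun n => norm_nonneg _)
      (fun n => by simpa [Real.norm_eq_abs] using hfb n)
  -- value of the sum
  have hHval : H = ∑ j ∈ range b, (1:ℝ)/j := by
    obtain ⟨c, rfl⟩ : ∃ c, b = c + 1 := ⟨b - 1, by omega⟩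
    rw [Finset.sum_range_succ']
    simp [hH]
  have hpartial : ∀ N : ℕ, 1 ≤ N → ∑ n ∈ range N, f n =
      ((harmonic (b*N) : ℝ) - 1/((b*N : ℕ):ℝ)) - ((harmonic N : ℝ) - 1/(N:ℝ)) - H := by
    intro N hN
    have hfu : ∑ n ∈ range N, f n =
        (∑ n ∈ range N, ((∑ j ∈ Finset.range b, (1 : ℝ) / (b * n + j)) - 1 / n)) - H := by
      obtain ⟨M, rfl⟩ : ∃ M, N = M + 1 := ⟨N - 1, by omega⟩
      rw [Finset.sum_range_succ', Finset.sum_range_succ' (fun n =>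
        (∑ j ∈ Finset.range b, (1 : ℝ) / (b * n + j)) - 1 / n)]
      simp only [hf]
      push_cast [hHval]
      simp
    rw [hfu, Finset.sum_sub_distrib, sum_reindex N, sum_one_div_eq, sum_one_div_eq]
  have hbn : Tendsto (fun N : ℕ => b * N) atTop atTop :=
    tendsto_atTop_mono (fun N => Nat.le_mul_of_pos_left N hb0) tendsto_id
  have t1 : Tendsto (fun N : ℕ => (harmonic (b*N) : ℝ) - Real.log ((b*N : ℕ):ℝ)) atTop
      (nhds Real.eulerMascheroniConstant) := Real.tendsto_harmonic_sub_log.comp hbn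
  have t2 := Real.tendsto_harmonic_sub_log
  have t3 : Tendsto (fun N : ℕ => 1/((b*N : ℕ):ℝ)) atTop (nhds 0) :=
    tendsto_one_div_atTop_nhds_zero_nat.comp hbn
  have t4 := tendsto_one_div_atTop_nhds_zero_nat (𝕜 := ℝ)
  have tmain : Tendsto (fun N : ℕ =>
      ((harmonic (b*N) : ℝ) - Real.log ((b*N : ℕ):ℝ))
      - ((harmonic N : ℝ) - Real.log N) - 1/((b*N : ℕ):ℝ) + 1/(N:ℝ) + (Real.log b - H))
      atTop (nhds (Real.log b - H)) := by
    have := (((t1.sub t2).sub t3).add t4).add (tendsto_const_nhds (x := Real.log b - H))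
    simpa using this
  have hSf : Tendsto (fun N : ℕ => ∑ n ∈ range N, f n) atTop (nhds (Real.log b - H)) := by
    apply tmain.congr'
    filter_upwards [eventually_ge_atTop 1] with N hN
    have hNR : (0:ℝ) < N := by exact_mod_cast Nat.lt_of_lt_of_le Nat.zero_lt_one hN
    have hlog : Real.log ((b*N : ℕ):ℝ) = Real.log b + Real.log N := by
      push_cast
      exact Real.log_mul (by positivity) hNR.ne'
    rw [hpartial N hN, hlog]
    ring
  have hhs : HasSum f (Real.log b - H) :=
    (hasSum_iff_tendsto_nat_of_summable_norm hnormf).mpr hSf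
  -- dominated convergence
  have hpt : ∀ n : ℕ, Tendsto (fun k : ℕ =>
      if 1 ≤ (Nat.digits b n).sum ∧ (Nat.digits b n).sum ≤ k then
        (∑ j ∈ Finset.range b, (1 : ℝ) / (b * n + j)) - 1 / n
      else 0) atTop (nhds (f n)) := by
    intro n
    by_cases hn : n = 0
    · subst hn
      simp only [Nat.digits_zero, List.sum_nil]
      norm_num
      simpa [hf] using tendsto_const_nhds
    · apply tendsto_const_nhds.congr'
      filter_upwards [eventually_ge_atTop ((Nat.digits b n).sum)] with k hk
      rw [if_pos ⟨digitsum_pos hn, hk⟩]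
      simp [hf, hn]
  have hbd : ∀ᶠ (k : ℕ) in atTop, ∀ n : ℕ,
      ‖if 1 ≤ (Nat.digits b n).sum ∧ (Nat.digits b n).sum ≤ k then
        (∑ j ∈ Finset.range b, (1 : ℝ) / (b * n + j)) - 1 / n
      else 0‖ ≤ (b:ℝ) * (1 / (n:ℝ)^2) := by
    apply Filter.Eventually.of_forall
    intro k n
    by_cases hc : 1 ≤ (Nat.digits b n).sum ∧ (Nat.digits b n).sum ≤ k
    · rw [if_pos hc]
      have hn : n ≠ 0 := by
        intro h; subst h; simp at hc
      simpa [Real.norm_eq_abs] using u_abs_le hb hn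
    · rw [if_neg hc]
      simp
      positivity
  have main := tendsto_tsum_of_dominated_convergence hsumbound hpt hbd
  rwa [hhs.tsum_eq] at main
end

section
/- Let $b \geq 2$, and for each $j \in \{0, 1, \ldots, b-1\}$, $\lim_{k \to \infty} \sum_{n \geq 1,\ s_b(n) = k} \left(\frac{1}{bn+j} - \frac{1}{bn}\right) = 0$. -/
theorem tendsto_diff_terms_zero (b : ℕ) (hb : 2 ≤ b) (j : ℕ) (hj : j ≤ b - 1) :
    Filter.Tendsto
      (fun k : ℕ => ∑' n : ℕ,
        if (Nat.digits b n).sum = k then (1 : ℝ) / (b * n + j) - 1 / (b * n) else 0)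
      Filter.atTop (nhds 0) := by
  set t : ℕ → ℝ := fun n => (1 : ℝ) / (b * n + j) - 1 / (b * n) with ht
  set g : ℕ → ℝ := fun n => |t n| with hg
  have hb0 : (0:ℝ) < b := by exact_mod_cast (by omega : 0 < b)
  have hgsum : Summable g := by
    rw [← summable_nat_add_iff 1]
    apply Summable.of_nonneg_of_le (fun n => abs_nonneg _) (fun n => ?_)
      ((summable_nat_add_iff 1).mpr
        (((Real.summable_one_div_nat_pow (p := 2)).mpr one_lt_two).mul_left (j : ℝ)))
    have hx : (0:ℝ) < b * (n + 1) := by positivity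
    have hxj : (0:ℝ) < b * (n + 1) + j := by positivity
    have hb1 : (1:ℝ) ≤ b := by exact_mod_cast (by omega : 1 ≤ b)
    have hx1 : ((n:ℝ) + 1) ≤ b * (n + 1) := by nlinarith
    have key : t (n + 1) = -((j:ℝ) / ((b * (n+1)) * (b * (n+1) + j))) := by
      simp only [ht]
      push_cast
      field_simp
      try ring
      try exact Or.inl trivial
    rw [key, abs_neg, abs_of_nonneg (by positivity), mul_one_div]
    apply div_le_div_of_nonneg_left (by positivity) (by positivity)
    push_cast
    nlinarith [hj, (j:ℝ) ≥ 0]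
  set s : ℕ → ℕ := fun n => (Nat.digits b n).sum with hs
  have hind : ∀ k, Summable (fun n => if s n = k then g n else 0) := by
    intro k
    refine hgsum.of_nonneg_of_le (fun n => ?_) (fun n => ?_)
    · split <;> simp [hg, abs_nonneg]
    · split
      · exact le_rfl
      · exact abs_nonneg _
  have hh : Summable (fun p : ℕ × ℕ => if s p.2 = p.1 then g p.2 else 0) := by
    have hinj : Function.Injective (fun n : ℕ => ((s n, n) : ℕ × ℕ)) := by
      intro a b hab
      simpa using congrArg Prod.snd hab
    rw [← Function.Injective.summable_iff hinj]
    · exact hgsum.congr fun n => by simp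
    · intro p hp
      have : s p.2 ≠ p.1 := by
        intro h
        exact hp ⟨p.2, by simp [h]⟩
      simp [this]
  have hG : Summable (fun k => ∑' n : ℕ, if s n = k then g n else 0) := by
    refine ((summable_prod_of_nonneg ?_).mp hh).2
    intro p
    simp only [Pi.zero_apply]
    split <;> simp [hg, abs_nonneg]
  refine squeeze_zero_norm (fun k => ?_) hG.tendsto_atTop_zero
  have := norm_tsum_le_tsum_norm (f := fun n => if s n = k then t n else 0) ?_
  · refine le_trans this (le_of_eq ?_)
    congr 1
    funext n
    split <;> simp_all [hg, Real.norm_eq_abs]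
  · refine (hind k).congr fun n => ?_
    split <;> simp_all [hg, Real.norm_eq_abs]
end

section
/- Let $a(n)$ denote the number of (possibly overlapping) occurrences of the block $11$ in the binary expansion of $n$. Then $\lim_{k \to \infty} \sum_{n \geq 1,\ a(n) = k} \frac{1}{n} = 4 \log 2$. -/
open Filter Set Topology

namespace KempnerEleven



/-- number of occurrences of block `11` -/
noncomputable def aa (n : ℕ) : ℕ := {i : ℕ | Nat.testBit n i ∧ Nat.testBit n (i + 1)}.ncard

lemma kb_subset (n : ℕ) : {i : ℕ | Nat.testBit n i ∧ Nat.testBit n (i + 1)} ⊆ Set.Iio n := by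
  intro i hi
  have h1 : Nat.testBit n i = true := hi.1
  have h2 : ¬ n < 2 ^ i := fun h => by simp [Nat.testBit_eq_false_of_lt h] at h1
  have : i < 2 ^ i := Nat.lt_two_pow_self (n := i)
  simp only [Set.mem_Iio]
  omega

lemma kb_finite (n : ℕ) : {i : ℕ | Nat.testBit n i ∧ Nat.testBit n (i + 1)}.Finite :=
  (Set.finite_Iio n).subset (kb_subset n)

lemma aa_zero : aa 0 = 0 := by
  simp [aa, Nat.zero_testBit]

lemma set_eq_of_div (n m : ℕ) (hdiv : n / 2 = m)
    (h0 : ¬ (Nat.testBit n 0 ∧ Nat.testBit n 1)) :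
    {i : ℕ | Nat.testBit n i ∧ Nat.testBit n (i + 1)}
      = (fun j => j + 1) '' {i : ℕ | Nat.testBit m i ∧ Nat.testBit m (i + 1)} := by
  ext i
  constructor
  · intro hi
    cases i with
    | zero => exact absurd hi h0
    | succ j =>
      refine ⟨j, ⟨?_, ?_⟩, rfl⟩
      · have := hi.1; rwa [Nat.testBit_add_one, hdiv] at this
      · have := hi.2; rwa [Nat.testBit_add_one, hdiv] at this
  · rintro ⟨j, hj, rfl⟩
    exact ⟨by rw [Nat.testBit_add_one, hdiv]; exact hj.1,
           by rw [Nat.testBit_add_one, hdiv]; exact hj.2⟩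

lemma set_eq_of_div' (n m : ℕ) (hdiv : n / 2 = m)
    (h0 : Nat.testBit n 0 ∧ Nat.testBit n 1) :
    {i : ℕ | Nat.testBit n i ∧ Nat.testBit n (i + 1)}
      = insert 0 ((fun j => j + 1) '' {i : ℕ | Nat.testBit m i ∧ Nat.testBit m (i + 1)}) := by
  ext i
  constructor
  · intro hi
    cases i with
    | zero => exact Set.mem_insert _ _
    | succ j =>
      refine Set.mem_insert_of_mem _ ⟨j, ⟨?_, ?_⟩, rfl⟩
      · have := hi.1; rwa [Nat.testBit_add_one, hdiv] at this
      · have := hi.2; rwa [Nat.testBit_add_one, hdiv] at this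
  · intro hi
    rcases hi with rfl | ⟨j, hj, rfl⟩
    · exact h0
    · exact ⟨by rw [Nat.testBit_add_one, hdiv]; exact hj.1,
             by rw [Nat.testBit_add_one, hdiv]; exact hj.2⟩

lemma succ_inj' : Function.Injective (fun j : ℕ => j + 1) := fun a b h => by simpa using h

lemma aa_even (m : ℕ) : aa (2 * m) = aa m := by
  rw [aa, set_eq_of_div (2 * m) m (by omega)
    (by simp [Nat.testBit_zero, Nat.mul_mod_right]),
    Set.ncard_image_of_injective _ succ_inj']
  rfl

lemma aa_odd (m : ℕ) : aa (2 * m + 1) = aa m + m % 2 := by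
  have hdiv : (2 * m + 1) / 2 = m := by omega
  have h00 : Nat.testBit (2 * m + 1) 0 = true := by
    simp [Nat.testBit_zero, Nat.mul_add_mod]
  have h01 : Nat.testBit (2 * m + 1) 1 = Nat.testBit m 0 := by
    rw [Nat.testBit_add_one, hdiv]
  by_cases hb : Nat.testBit m 0 = true
  · have hm2 : m % 2 = 1 := by simpa [Nat.testBit_zero] using hb
    rw [aa, set_eq_of_div' (2 * m + 1) m hdiv ⟨h00, by rw [h01]; exact hb⟩,
      Set.ncard_insert_of_notMem (by simp) ((kb_finite m).image _),
      Set.ncard_image_of_injective _ succ_inj', hm2]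
    rfl
  · have hm2 : m % 2 = 0 := by
      simp only [Nat.testBit_zero, decide_eq_true_eq] at hb
      omega
    rw [aa, set_eq_of_div (2 * m + 1) m hdiv (fun hc => hb (by rw [← h01]; exact hc.2)),
      Set.ncard_image_of_injective _ succ_inj', hm2]
    rfl

lemma aa_bound {m K : ℕ} (h : m < 2 ^ K) : aa m + m % 2 ≤ K := by
  rcases Nat.eq_zero_or_pos m with rfl | hm
  · simp [aa_zero]
  · have hK : 1 ≤ K := by
      by_contra hK
      interval_cases K <;> omega
    have hsub : {i : ℕ | Nat.testBit m i ∧ Nat.testBit m (i + 1)} ⊆ Set.Iio (K - 1) := by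
      intro i hi
      have h1 : Nat.testBit m (i + 1) = true := hi.2
      have h2 : ¬ m < 2 ^ (i + 1) := fun hlt => by
        simp [Nat.testBit_eq_false_of_lt hlt] at h1
      have h3 : 2 ^ (i + 1) < 2 ^ K := by omega
      have h4 : i + 1 < K := (Nat.pow_lt_pow_iff_right (by norm_num)).1 h3
      simp only [Set.mem_Iio]; omega
    have h5 : aa m ≤ K - 1 := by
      have := Set.ncard_le_ncard hsub (Set.finite_Iio _)
      rwa [show Set.Iio (K - 1) = ↑(Finset.Iio (K - 1)) by simp,
        Set.ncard_coe_finset, Nat.card_Iio] at this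
    have : m % 2 ≤ 1 := by omega
    omega





noncomputable def ww (n : ℕ) : ℝ := (2 : ℝ)⁻¹ ^ (aa n)

noncomputable def phi (n : ℕ) : ℝ := ww n * (if n % 2 = 1 then (4/5 : ℝ) else 1)

lemma ww_pos (n : ℕ) : 0 < ww n := by unfold ww; positivity

lemma phi_pos (n : ℕ) : 0 < phi n := by
  unfold phi
  have := ww_pos n
  split <;> nlinarith

lemma ww_le_phi (n : ℕ) : ww n ≤ (5/4 : ℝ) * phi n := by
  unfold phi
  have := ww_pos n
  split <;> nlinarith

lemma sum_range_two_mul (f : ℕ → ℝ) (N : ℕ) :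
    ∑ n ∈ Finset.range (2 * N), f n = ∑ m ∈ Finset.range N, (f (2 * m) + f (2 * m + 1)) := by
  induction N with
  | zero => simp
  | succ N ih =>
    rw [Finset.sum_range_succ, ← ih, show 2 * (N + 1) = (2 * N + 1) + 1 by ring,
      Finset.sum_range_succ, Finset.sum_range_succ]
    ring

lemma phi_step (m : ℕ) : phi (2 * m) + phi (2 * m + 1) ≤ (9/5 : ℝ) * phi m := by
  have hw : (0 : ℝ) < (2 : ℝ)⁻¹ ^ (aa m) := by positivity
  unfold phi ww
  rw [aa_even, aa_odd]
  rcases Nat.mod_two_eq_zero_or_one m with h | h <;>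
    simp only [h, Nat.mul_mod_right, Nat.mul_add_mod, pow_add, pow_zero, pow_one] <;>
    norm_num <;> nlinarith

lemma phi_sum_bound (r : ℕ) : ∑ n ∈ Finset.range (2 ^ r), phi n ≤ (9/5 : ℝ) ^ r := by
  induction r with
  | zero =>
    simp [phi, ww, aa_zero]
  | succ r ih =>
    rw [pow_succ, mul_comm ((2:ℕ)^r) 2, sum_range_two_mul]
    calc ∑ m ∈ Finset.range (2 ^ r), (phi (2 * m) + phi (2 * m + 1))
        ≤ ∑ m ∈ Finset.range (2 ^ r), (9/5 : ℝ) * phi m :=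
          Finset.sum_le_sum fun m _ => phi_step m
      _ = (9/5 : ℝ) * ∑ m ∈ Finset.range (2 ^ r), phi m := by rw [Finset.mul_sum]
      _ ≤ (9/5 : ℝ) * (9/5 : ℝ) ^ r := by nlinarith
      _ = (9/5 : ℝ) ^ (r + 1) := by ring

lemma ww_sum_bound (r : ℕ) : ∑ n ∈ Finset.range (2 ^ r), ww n ≤ (5/4 : ℝ) * (9/5 : ℝ) ^ r := by
  calc ∑ n ∈ Finset.range (2 ^ r), ww n ≤ ∑ n ∈ Finset.range (2 ^ r), (5/4 : ℝ) * phi n :=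
        Finset.sum_le_sum fun n _ => ww_le_phi n
    _ = (5/4 : ℝ) * ∑ n ∈ Finset.range (2 ^ r), phi n := by rw [Finset.mul_sum]
    _ ≤ _ := by have := phi_sum_bound r; nlinarith

noncomputable def hh (n : ℕ) : ℝ := ww n * ((1 : ℝ) / n)

lemma hh_nonneg (n : ℕ) : 0 ≤ hh n := by
  unfold hh
  have := ww_pos n
  positivity

lemma hh_block_bound (r : ℕ) :
    ∑ n ∈ Finset.range (2 ^ r), hh n ≤ (45/2 : ℝ) * (1 - (9/10 : ℝ) ^ r) := by
  induction r with
  | zero => simp [hh]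
  | succ r ih =>
    have hle : (2:ℕ) ^ r ≤ 2 ^ (r + 1) := Nat.pow_le_pow_right (by norm_num) (by omega)
    have hsplit : ∑ n ∈ Finset.range (2 ^ (r+1)), hh n
        = ∑ n ∈ Finset.range (2 ^ r), hh n + ∑ n ∈ Finset.Ico (2^r) (2^(r+1)), hh n := by
      rw [Finset.range_eq_Ico, Finset.range_eq_Ico]
      exact (Finset.sum_Ico_consecutive hh (Nat.zero_le _) hle).symm
    have hterm : ∀ n ∈ Finset.Ico (2^r) (2^(r+1)), hh n ≤ ww n * ((1:ℝ) / (2:ℝ)^r) := by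
      intro n hn
      rw [Finset.mem_Ico] at hn
      have h1 : ((2:ℝ)^r) ≤ (n:ℝ) := by
        have := hn.1; push_cast; exact_mod_cast this
      have h2 : (0:ℝ) < (2:ℝ)^r := by positivity
      have : (1:ℝ)/n ≤ 1/(2:ℝ)^r := one_div_le_one_div_of_le h2 h1
      exact mul_le_mul_of_nonneg_left this (ww_pos n).le
    have hblock : ∑ n ∈ Finset.Ico (2^r) (2^(r+1)), hh n
        ≤ ((1:ℝ)/(2:ℝ)^r) * ((5/4 : ℝ) * (9/5 : ℝ) ^ (r+1)) := by
      calc ∑ n ∈ Finset.Ico (2^r) (2^(r+1)), hh n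
          ≤ ∑ n ∈ Finset.Ico (2^r) (2^(r+1)), ww n * ((1:ℝ)/(2:ℝ)^r) :=
            Finset.sum_le_sum hterm
        _ = ((1:ℝ)/(2:ℝ)^r) * ∑ n ∈ Finset.Ico (2^r) (2^(r+1)), ww n := by
            rw [← Finset.sum_mul, mul_comm]
        _ ≤ ((1:ℝ)/(2:ℝ)^r) * ∑ n ∈ Finset.range (2^(r+1)), ww n := by
            apply mul_le_mul_of_nonneg_left _ (by positivity)
            apply Finset.sum_le_sum_of_subset_of_nonneg
            · rw [Finset.range_eq_Ico]
              exact Finset.Ico_subset_Ico (Nat.zero_le _) le_rfl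
            · intro n _ _; exact (ww_pos n).le
        _ ≤ _ := mul_le_mul_of_nonneg_left (ww_sum_bound (r+1)) (by positivity)
    have hkey : ((1:ℝ)/(2:ℝ)^r) * ((5/4 : ℝ) * (9/5 : ℝ) ^ (r+1)) = (9/4 : ℝ) * (9/10:ℝ)^r := by
      have h2 : ((9:ℝ)/10)^r * 2^r = (9/5)^r := by
        rw [← mul_pow]; norm_num
      have h3 : (0:ℝ) < (2:ℝ)^r := by positivity
      have h4 : (9/5:ℝ)^(r+1) = (9/5) * ((9/10:ℝ)^r * 2^r) := by rw [h2]; ring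
      rw [h4]
      field_simp
    have hp : (9/10:ℝ)^(r+1) = (9/10) * (9/10:ℝ)^r := by ring
    rw [hsplit]
    rw [hkey] at hblock
    linarith
  
lemma summable_hh : Summable hh := by
  apply summable_of_sum_range_le hh_nonneg
  intro N
  calc ∑ n ∈ Finset.range N, hh n ≤ ∑ n ∈ Finset.range (2 ^ N), hh n := by
        apply Finset.sum_le_sum_of_subset_of_nonneg
        · exact Finset.range_subset_range.2 (Nat.lt_two_pow_self (n := N)).le
        · intro n _ _; exact hh_nonneg n
    _ ≤ (45/2 : ℝ) * (1 - (9/10 : ℝ) ^ N) := hh_block_bound N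
    _ ≤ 45/2 := by
        have : (0:ℝ) ≤ (9/10:ℝ)^N := by positivity
        nlinarith

lemma summable_cond (P : ℕ → Prop) [DecidablePred P] (k : ℕ) (hP : ∀ m, P m → aa m ≤ k) :
    Summable (fun m => if P m then (1 : ℝ) / m else 0) := by
  apply Summable.of_nonneg_of_le (g := fun m => if P m then (1 : ℝ) / m else 0)
    (fun m => by split <;> positivity)
    _ (summable_hh.mul_left ((2:ℝ)^k))
  intro m
  by_cases hm : P m
  · simp only [hm, if_true]
    have h1 : ((2:ℝ)⁻¹) ^ k ≤ (2:ℝ)⁻¹ ^ (aa m) :=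
      pow_le_pow_of_le_one (by norm_num) (by norm_num) (hP m hm)
    have h2 : (1:ℝ) ≤ (2:ℝ)^k * ww m := by
      have : ((2:ℝ))^k * ((2:ℝ)⁻¹)^k = 1 := by
        rw [← mul_pow]; norm_num
      have h3 : (0:ℝ) < (2:ℝ)^k := by positivity
      unfold ww
      nlinarith
    have h4 : (0:ℝ) ≤ (1:ℝ)/m := by positivity
    calc (1:ℝ)/m = 1 * ((1:ℝ)/m) := by ring
      _ ≤ ((2:ℝ)^k * ww m) * ((1:ℝ)/m) := mul_le_mul_of_nonneg_right h2 h4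
      _ = (2:ℝ)^k * hh m := by unfold hh; ring
  · simp only [hm, if_false]
    have := hh_nonneg m
    positivity





noncomputable def gg (m : ℕ) : ℕ := aa m + m % 2

lemma gg_even (m : ℕ) : gg (2 * m) = aa m := by
  simp [gg, aa_even, Nat.mul_mod_right]

lemma gg_odd (m : ℕ) : gg (2 * m + 1) = gg m + 1 := by
  simp [gg, aa_odd, Nat.mul_add_mod]

lemma gg_zero : gg 0 = 0 := by simp [gg, aa_zero]

noncomputable def ff (k n : ℕ) : ℝ := if 1 ≤ n ∧ aa n = k then (1 : ℝ) / n else 0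

noncomputable def S (k : ℕ) : ℝ := ∑' n, ff k n

noncomputable def Tt (k : ℕ) : ℝ :=
  ∑' m : ℕ, (if gg m = k then (1 : ℝ) / (2 * (m : ℝ) + 1) else 0)

noncomputable def Sg (k : ℕ) : ℝ :=
  ∑' m : ℕ, (if 1 ≤ m ∧ gg m = k then (1 : ℝ) / (2 * (m : ℝ) + 1) else 0)

noncomputable def Vg (k : ℕ) : ℝ :=
  ∑' m : ℕ, (if 1 ≤ m ∧ gg m = k then (1 : ℝ) / m else 0)

noncomputable def Dg (k : ℕ) : ℝ :=
  ∑' m : ℕ, (if 1 ≤ m ∧ gg m = k then (1 : ℝ) / (2 * (m : ℝ)) - 1 / (2 * (m : ℝ) + 1) else 0)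

lemma two_mul_inj : Function.Injective (fun m : ℕ => 2 * m) := by
  intro a b h; simp only at h; omega

lemma two_mul_add_one_inj : Function.Injective (fun m : ℕ => 2 * m + 1) := by
  intro a b h; simp only at h; omega

lemma summable_ff (k : ℕ) : Summable (ff k) :=
  summable_cond (fun n => 1 ≤ n ∧ aa n = k) k (fun _ hm => hm.2.le)

lemma summable_Vg (k : ℕ) : Summable (fun m => if 1 ≤ m ∧ gg m = k then (1 : ℝ) / m else 0) :=
  summable_cond _ k (fun m hm => by have := hm.2; unfold gg at this; omega)

lemma Sg_term_le (k m : ℕ) :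
    (if 1 ≤ m ∧ gg m = k then (1 : ℝ) / (2 * (m : ℝ) + 1) else 0)
      ≤ (if 1 ≤ m ∧ gg m = k then (1 : ℝ) / m else 0) := by
  split
  · rename_i hc
    apply one_div_le_one_div_of_le
    · exact_mod_cast Nat.pos_of_ne_zero (by omega)
    · have : (1:ℝ) ≤ (m:ℝ) := by exact_mod_cast hc.1
      linarith
  · exact le_refl _

lemma summable_Sg (k : ℕ) :
    Summable (fun m => if 1 ≤ m ∧ gg m = k then (1 : ℝ) / (2 * (m : ℝ) + 1) else 0) := by
  apply Summable.of_nonneg_of_le (fun m => by by_cases h : 1 ≤ m ∧ gg m = k <;> simp [h] <;> positivity)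
    (Sg_term_le k) (summable_Vg k)

lemma Dg_term_nonneg (k m : ℕ) :
    0 ≤ (if 1 ≤ m ∧ gg m = k then (1 : ℝ) / (2 * (m : ℝ)) - 1 / (2 * (m : ℝ) + 1) else 0) := by
  split
  · rename_i hc
    have h1 : (1:ℝ) ≤ (m:ℝ) := by exact_mod_cast hc.1
    have h2 : (0:ℝ) < 2 * (m:ℝ) := by linarith
    have h3 : (0:ℝ) < 2 * (m:ℝ) + 1 := by linarith
    rw [sub_nonneg]
    apply one_div_le_one_div_of_le h2 (by linarith)
  · exact le_refl 0

lemma Dg_term_le (k m : ℕ) :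
    (if 1 ≤ m ∧ gg m = k then (1 : ℝ) / (2 * (m : ℝ)) - 1 / (2 * (m : ℝ) + 1) else 0)
      ≤ (if 1 ≤ m ∧ gg m = k then (1 : ℝ) / m else 0) := by
  split
  · rename_i hc
    have h1 : (1:ℝ) ≤ (m:ℝ) := by exact_mod_cast hc.1
    have h3 : (0:ℝ) < 2 * (m:ℝ) + 1 := by linarith
    have : (1:ℝ) / (2 * (m:ℝ)) ≤ 1 / (m:ℝ) := by
      apply one_div_le_one_div_of_le (by linarith) (by linarith)
    have h4 : 0 < (1:ℝ) / (2 * (m:ℝ) + 1) := by positivity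
    linarith
  · exact le_refl 0

lemma summable_Dg (k : ℕ) :
    Summable (fun m => if 1 ≤ m ∧ gg m = k then
      (1 : ℝ) / (2 * (m : ℝ)) - 1 / (2 * (m : ℝ) + 1) else 0) :=
  Summable.of_nonneg_of_le (Dg_term_nonneg k) (Dg_term_le k) (summable_Vg k)

lemma ff_even (k m : ℕ) : ff k (2 * m) = (1/2 : ℝ) * ff k m := by
  unfold ff
  rcases Nat.eq_zero_or_pos m with rfl | hm
  · norm_num
  · have hcond : (1 ≤ 2 * m ∧ aa (2 * m) = k) ↔ (1 ≤ m ∧ aa m = k) := by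
      rw [aa_even]
      constructor <;> rintro ⟨h1, h2⟩ <;> exact ⟨by omega, h2⟩
    rw [if_congr hcond rfl rfl]
    split
    · have hm0 : (m:ℝ) ≠ 0 := Nat.cast_ne_zero.2 (by omega)
      push_cast
      rw [eq_comm]
      field_simp
    · ring

lemma ff_odd (k m : ℕ) : ff k (2 * m + 1)
    = if gg m = k then (1 : ℝ) / (2 * (m : ℝ) + 1) else 0 := by
  unfold ff
  have h1 : 1 ≤ 2 * m + 1 := by omega
  have h2 : aa (2 * m + 1) = gg m := by rw [aa_odd]; rfl
  simp only [h1, true_and, h2]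
  congr 1
  push_cast
  ring

lemma summable_ff_even (k : ℕ) : Summable (fun m => ff k (2 * m)) :=
  (summable_ff k).comp_injective two_mul_inj

lemma summable_ff_odd (k : ℕ) : Summable (fun m => ff k (2 * m + 1)) :=
  (summable_ff k).comp_injective two_mul_add_one_inj

lemma summable_Tt (k : ℕ) :
    Summable (fun m => if gg m = k then (1:ℝ)/(2*(m:ℝ)+1) else 0) := by
  have h := summable_ff_odd k
  simpa only [ff_odd] using h

lemma even_tsum (k : ℕ) : ∑' m, ff k (2 * m) = (1/2 : ℝ) * S k := by
  calc ∑' m, ff k (2 * m) = ∑' m, (1/2 : ℝ) * ff k m := tsum_congr (fun m => ff_even k m)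
    _ = (1/2 : ℝ) * S k := tsum_mul_left

lemma T_eq (k : ℕ) : Tt k = (1/2 : ℝ) * S k := by
  have h := tsum_even_add_odd (summable_ff_even k) (summable_ff_odd k)
  have h2 : ∑' m, ff k (2*m+1) = Tt k := tsum_congr (fun m => ff_odd k m)
  rw [even_tsum, h2] at h
  have hS : S k = ∑' n, ff k n := rfl
  linarith [h, hS]

lemma T_split (k : ℕ) : Tt k = (if k = 0 then (1:ℝ) else 0) + Sg k := by
  rw [Tt, Summable.tsum_eq_zero_add (summable_Tt k), Sg, Summable.tsum_eq_zero_add (summable_Sg k)]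
  have h0 : (if gg 0 = k then (1:ℝ)/(2*((0:ℕ):ℝ)+1) else 0) = (if k = 0 then (1:ℝ) else 0) := by
    rw [gg_zero]
    by_cases hk : k = 0
    · subst hk; norm_num
    · rw [if_neg (Ne.symm hk), if_neg hk]
  have h1 : (if 1 ≤ (0:ℕ) ∧ gg 0 = k then (1:ℝ)/(2*((0:ℕ):ℝ)+1) else 0) = 0 := by norm_num
  rw [h0, h1]
  have h2 : ∀ m : ℕ, (if gg (m+1) = k then (1:ℝ)/(2*((m+1:ℕ):ℝ)+1) else 0)
      = (if 1 ≤ m+1 ∧ gg (m+1) = k then (1:ℝ)/(2*((m+1:ℕ):ℝ)+1) else 0) := by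
    intro m
    rw [if_congr (show (gg (m+1) = k) ↔ (1 ≤ m+1 ∧ gg (m+1) = k) from by
      simp [show 1 ≤ m+1 by omega]) rfl rfl]
  rw [tsum_congr h2]
  ring

lemma psi_even (k m : ℕ) :
    (if 1 ≤ 2*m ∧ gg (2*m) = k then (1:ℝ)/((2*m : ℕ) : ℝ) else 0) = (1/2:ℝ) * ff k m := by
  unfold ff
  rcases Nat.eq_zero_or_pos m with rfl | hm
  · norm_num
  · have hcond : (1 ≤ 2*m ∧ gg (2*m) = k) ↔ (1 ≤ m ∧ aa m = k) := by
      rw [gg_even]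
      constructor <;> rintro ⟨h1,h2⟩ <;> exact ⟨by omega, h2⟩
    rw [if_congr hcond rfl rfl]
    split
    · have hm0 : (m:ℝ) ≠ 0 := Nat.cast_ne_zero.2 (by omega)
      push_cast
      rw [eq_comm]
      field_simp
    · ring

lemma psi_odd (k m : ℕ) :
    (if 1 ≤ 2*m+1 ∧ gg (2*m+1) = k then (1:ℝ)/((2*m+1 : ℕ):ℝ) else 0)
      = (if gg m + 1 = k then (1:ℝ)/(2*(m:ℝ)+1) else 0) := by
  have h1 : (1 ≤ 2*m+1 ∧ gg (2*m+1) = k) ↔ (gg m + 1 = k) := by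
    rw [gg_odd]
    exact ⟨fun h => h.2, fun h => ⟨by omega, h⟩⟩
  rw [if_congr h1 rfl rfl]
  split
  · push_cast; ring
  · rfl

lemma Vg_half (k : ℕ) : Vg k = (1/2:ℝ) * S k + (if k = 0 then 0 else Tt (k-1)) := by
  have hV := tsum_even_add_odd (f := fun n : ℕ => if 1 ≤ n ∧ gg n = k then (1:ℝ)/n else 0)
    ((summable_Vg k).comp_injective two_mul_inj)
    ((summable_Vg k).comp_injective two_mul_add_one_inj)
  have he : ∑' m, (fun n : ℕ => if 1 ≤ n ∧ gg n = k then (1:ℝ)/n else 0) (2*m)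
      = (1/2:ℝ)*S k := by
    calc ∑' m, (fun n : ℕ => if 1 ≤ n ∧ gg n = k then (1:ℝ)/n else 0) (2*m)
        = ∑' m, (1/2:ℝ) * ff k m := tsum_congr (fun m => psi_even k m)
      _ = _ := tsum_mul_left
  have ho : ∑' m, (fun n : ℕ => if 1 ≤ n ∧ gg n = k then (1:ℝ)/n else 0) (2*m+1)
      = (if k = 0 then 0 else Tt (k-1)) := by
    calc ∑' m, (fun n : ℕ => if 1 ≤ n ∧ gg n = k then (1:ℝ)/n else 0) (2*m+1)
        = ∑' m, (if gg m + 1 = k then (1:ℝ)/(2*(m:ℝ)+1) else 0) :=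
          tsum_congr (fun m => psi_odd k m)
      _ = _ := by
        cases k with
        | zero => simp
        | succ j =>
          simp only [Nat.succ_ne_zero, if_false, Nat.succ_sub_one]
          apply tsum_congr
          intro m
          rw [if_congr (show (gg m + 1 = j + 1) ↔ (gg m = j) from by omega) rfl rfl]
  calc Vg k = (∑' m, (fun n : ℕ => if 1 ≤ n ∧ gg n = k then (1:ℝ)/n else 0) (2*m))
        + ∑' m, (fun n : ℕ => if 1 ≤ n ∧ gg n = k then (1:ℝ)/n else 0) (2*m+1) := hV.symm
    _ = (1/2:ℝ) * S k + (if k = 0 then 0 else Tt (k-1)) := by rw [he, ho]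

lemma Vg_split (k : ℕ) : (1/2 : ℝ) * Vg k = Sg k + Dg k := by
  rw [Sg, Dg, Vg, ← tsum_mul_left, ← Summable.tsum_add (summable_Sg k) (summable_Dg k)]
  apply tsum_congr
  intro m
  by_cases h : 1 ≤ m ∧ gg m = k
  · rw [if_pos h, if_pos h, if_pos h]
    have hm0 : (m:ℝ) ≠ 0 := Nat.cast_ne_zero.2 (by omega)
    have hm1 : 2*(m:ℝ) + 1 ≠ 0 := by positivity
    field_simp
    ring
  · simp [h]

lemma S_zero_eq : S 0 = 4 - 4 * Dg 0 := by
  have h1 := T_eq 0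
  have h2 := T_split 0
  have h3 := Vg_half 0
  have h4 := Vg_split 0
  norm_num at h2 h3
  linarith

lemma S_succ_eq (j : ℕ) : S (j+1) = S j - 4 * Dg (j+1) := by
  have h1 := T_eq (j+1)
  have h2 := T_split (j+1)
  have h3 := Vg_half (j+1)
  have h4 := Vg_split (j+1)
  have h5 := T_eq j
  norm_num at h2 h3
  linarith

lemma S_formula (K : ℕ) : S K = 4 - 4 * ∑ k ∈ Finset.range (K+1), Dg k := by
  induction K with
  | zero => rw [Finset.sum_range_one]; exact S_zero_eq
  | succ K ih =>
    rw [Finset.sum_range_succ, S_succ_eq K, ih]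
    ring

lemma Dg_sum (K : ℕ) : ∑ k ∈ Finset.range (K+1), Dg k
    = ∑' m : ℕ, (if 1 ≤ m ∧ gg m ≤ K then (1:ℝ)/(2*(m:ℝ)) - 1/(2*(m:ℝ)+1) else 0) := by
  unfold Dg
  rw [← Summable.tsum_finsetSum (fun k _ => summable_Dg k)]
  apply tsum_congr
  intro m
  by_cases h1 : 1 ≤ m
  · rw [Finset.sum_congr rfl (fun k _ => if_congr
        (show (1 ≤ m ∧ gg m = k) ↔ (gg m = k) from by simp [h1]) rfl rfl),
      Finset.sum_ite_eq]
    simp [Finset.mem_range, Nat.lt_succ_iff, h1]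
  · simp [h1]





noncomputable def cp (m : ℕ) : ℝ := if 1 ≤ m then (1:ℝ)/(2*(m:ℝ)) - 1/(2*(m:ℝ)+1) else 0

lemma cp_nonneg (m : ℕ) : 0 ≤ cp m := by
  unfold cp
  split
  · rename_i hc
    have h1 : (1:ℝ) ≤ (m:ℝ) := by exact_mod_cast hc
    rw [sub_nonneg]
    exact one_div_le_one_div_of_le (by linarith) (by linarith)
  · exact le_refl 0

lemma cp_le (m : ℕ) : cp m ≤ 1 / (m:ℝ)^2 := by
  unfold cp
  split
  · rename_i hc
    have h1 : (1:ℝ) ≤ (m:ℝ) := by exact_mod_cast hc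
    have e : (1:ℝ)/(2*(m:ℝ)) - 1/(2*(m:ℝ)+1) = 1/((2*(m:ℝ))*(2*(m:ℝ)+1)) := by
      rw [div_sub_div _ _ (by positivity) (by positivity)]
      congr 1
      ring
    rw [e]
    apply one_div_le_one_div_of_le (by positivity)
    nlinarith
  · positivity

lemma summable_cp : Summable cp := by
  apply Summable.of_nonneg_of_le cp_nonneg cp_le
  rw [Real.summable_one_div_nat_pow]
  norm_num

lemma partial_cp (N : ℕ) : ∑ m ∈ Finset.range (N+1), cp m
    = 1 + ((harmonic N : ℚ) : ℝ) - ((harmonic (2*N+1) : ℚ) : ℝ) := by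
  induction N with
  | zero =>
    rw [Finset.sum_range_one]
    have h1 : harmonic 1 = 1 := by
      rw [show (1:ℕ) = 0 + 1 from rfl, harmonic_succ]
      norm_num
    simp [cp, h1]
  | succ N ih =>
    rw [Finset.sum_range_succ, ih,
      show 2*(N+1)+1 = (2*N+1+1)+1 from by ring, harmonic_succ (2*N+1+1), harmonic_succ (2*N+1),
      show N+1 = N+1 from rfl, harmonic_succ N]
    have hc : cp (N+1) = (1:ℝ)/(2*((N+1:ℕ):ℝ)) - 1/(2*((N+1:ℕ):ℝ)+1) := by
      unfold cp
      rw [if_pos (by omega)]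
    rw [hc]
    have d1 : ((N:ℝ)+1) ≠ 0 := by positivity
    have d2 : (2*(N:ℝ)+2) ≠ 0 := by positivity
    have d3 : (2*(N:ℝ)+3) ≠ 0 := by positivity
    push_cast
    field_simp
    ring

lemma tendsto_partial_cp :
    Tendsto (fun N => ∑ m ∈ Finset.range (N+1), cp m) atTop (𝓝 (1 - Real.log 2)) := by
  have h2 : Tendsto (fun N : ℕ => 2*N+1) atTop atTop :=
    tendsto_atTop_mono (fun n => by simp only [id_eq]; omega) tendsto_id
  have hg := Real.tendsto_harmonic_sub_log
  have hg2 := hg.comp h2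
  have hone : Tendsto (fun N : ℕ => 2 + 1/(N:ℝ)) atTop (𝓝 (2:ℝ)) := by
    have h := tendsto_one_div_atTop_nhds_zero_nat (𝕜 := ℝ)
    simpa using tendsto_const_nhds.add h
  have hlog0 : Tendsto (fun N : ℕ => Real.log (2 + 1/(N:ℝ))) atTop (𝓝 (Real.log 2)) :=
    (Real.continuousAt_log (by norm_num)).tendsto.comp hone
  have hlog : Tendsto (fun N : ℕ => Real.log ((2*N+1 : ℕ):ℝ) - Real.log (N:ℝ))
      atTop (𝓝 (Real.log 2)) := by
    apply hlog0.congr'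
    filter_upwards [eventually_ge_atTop 1] with N hN
    have hN0 : (N:ℝ) ≠ 0 := by
      have : (0:ℝ) < (N:ℝ) := by exact_mod_cast hN
      linarith
    have hnum : ((2*N+1:ℕ):ℝ) ≠ 0 := by positivity
    have e1 : ((2*N+1:ℕ):ℝ) / (N:ℝ) = 2 + 1/(N:ℝ) := by
      push_cast
      field_simp
    rw [← e1, Real.log_div hnum hN0]
  have hF := (((tendsto_const_nhds (x := (1:ℝ))).add hg).sub hg2).sub hlog
  have hF2 : Tendsto (fun N : ℕ => 1 + ((harmonic N : ℚ):ℝ) - ((harmonic (2*N+1) : ℚ):ℝ))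
      atTop (𝓝 (1 + Real.eulerMascheroniConstant - Real.eulerMascheroniConstant
        - Real.log 2)) :=
    hF.congr (fun N => by simp only [Function.comp_apply]; ring)
  have hval : (1:ℝ) + Real.eulerMascheroniConstant - Real.eulerMascheroniConstant
      - Real.log 2 = 1 - Real.log 2 := by ring
  rw [hval] at hF2
  exact hF2.congr (fun N => (partial_cp N).symm)

lemma full_cp : ∑' m, cp m = 1 - Real.log 2 := by
  have h1 := summable_cp.hasSum.tendsto_sum_nat
  have h2 : Tendsto (fun N : ℕ => ∑ m ∈ Finset.range (N+1), cp m) atTop (𝓝 (∑' m, cp m)) :=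
    h1.comp (tendsto_atTop_mono (fun n => by simp only [id_eq]; omega) tendsto_id)
  exact tendsto_nhds_unique h2 tendsto_partial_cp

noncomputable def trunc (K : ℕ) : ℝ :=
  ∑' m : ℕ, (if 1 ≤ m ∧ gg m ≤ K then (1:ℝ)/(2*(m:ℝ)) - 1/(2*(m:ℝ)+1) else 0)

lemma trunc_term_le (K m : ℕ) :
    (if 1 ≤ m ∧ gg m ≤ K then (1:ℝ)/(2*(m:ℝ)) - 1/(2*(m:ℝ)+1) else 0) ≤ cp m := by
  unfold cp
  by_cases h : 1 ≤ m ∧ gg m ≤ K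
  · rw [if_pos h, if_pos h.1]
  · rw [if_neg h]
    split
    · rename_i hc
      have h1 : (1:ℝ) ≤ (m:ℝ) := by exact_mod_cast hc
      rw [sub_nonneg]
      exact one_div_le_one_div_of_le (by linarith) (by linarith)
    · exact le_refl 0

lemma trunc_term_nonneg (K m : ℕ) :
    0 ≤ (if 1 ≤ m ∧ gg m ≤ K then (1:ℝ)/(2*(m:ℝ)) - 1/(2*(m:ℝ)+1) else 0) := by
  split
  · rename_i hc
    have h1 : (1:ℝ) ≤ (m:ℝ) := by exact_mod_cast hc.1
    rw [sub_nonneg]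
    exact one_div_le_one_div_of_le (by linarith) (by linarith)
  · exact le_refl 0

lemma summable_trunc (K : ℕ) :
    Summable (fun m => if 1 ≤ m ∧ gg m ≤ K then (1:ℝ)/(2*(m:ℝ)) - 1/(2*(m:ℝ)+1) else 0) :=
  Summable.of_nonneg_of_le (trunc_term_nonneg K) (trunc_term_le K) summable_cp

lemma trunc_le_full (K : ℕ) : trunc K ≤ ∑' m, cp m :=
  Summable.tsum_le_tsum (trunc_term_le K) (summable_trunc K) summable_cp

lemma partial_le_trunc (K : ℕ) : ∑ m ∈ Finset.range (2^K), cp m ≤ trunc K := by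
  have he : ∑' m : ℕ, (if m < 2^K then cp m else 0) = ∑ m ∈ Finset.range (2^K), cp m := by
    rw [tsum_eq_sum (s := Finset.range (2^K)) (fun b hb => if_neg (by simpa using hb))]
    exact Finset.sum_congr rfl (fun x hx => if_pos (Finset.mem_range.1 hx))
  rw [← he]
  apply Summable.tsum_le_tsum _ _ (summable_trunc K)
  · intro m
    by_cases h1 : m < 2^K
    · rw [if_pos h1]
      unfold cp
      by_cases h2 : 1 ≤ m
      · have h3 : gg m ≤ K := aa_bound h1
        rw [if_pos h2, if_pos ⟨h2, h3⟩]
      · rw [if_neg h2]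
        exact trunc_term_nonneg K m
    · rw [if_neg h1]
      exact trunc_term_nonneg K m
  · apply Summable.of_nonneg_of_le (g := fun m : ℕ => if m < 2^K then cp m else 0)
      (fun m => by by_cases h : m < 2^K
                   · simpa [h] using cp_nonneg m
                   · simp [h])
      (fun m => by by_cases h : m < 2^K
                   · simp [h]
                   · simpa [h] using cp_nonneg m) summable_cp

lemma trunc_tendsto : Tendsto trunc atTop (𝓝 (1 - Real.log 2)) := by
  have hpow : Tendsto (fun K : ℕ => 2^K) atTop atTop :=
    tendsto_atTop_mono (fun K => by simp only [id_eq]; exact (Nat.lt_two_pow_self (n := K)).le) tendsto_id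
  have hlower : Tendsto (fun K => ∑ m ∈ Finset.range (2^K), cp m) atTop (𝓝 (1 - Real.log 2)) := by
    have h1 := summable_cp.hasSum.tendsto_sum_nat
    rw [full_cp] at h1
    exact h1.comp hpow
  refine tendsto_of_tendsto_of_tendsto_of_le_of_le hlower tendsto_const_nhds
    partial_le_trunc (fun K => ?_)
  rw [← full_cp]
  exact trunc_le_full K

lemma main : Tendsto S atTop (𝓝 (4 * Real.log 2)) := by
  have h1 : ∀ K, S K = 4 - 4 * trunc K := fun K => by rw [S_formula, Dg_sum]; rfl
  have h2 : Tendsto (fun K => (4:ℝ) - 4 * trunc K) atTop (𝓝 ((4:ℝ) - 4*(1 - Real.log 2))) :=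
    tendsto_const_nhds.sub (trunc_tendsto.const_mul 4)
  have h3 : (4:ℝ) - 4*(1 - Real.log 2) = 4 * Real.log 2 := by ring
  rw [h3] at h2
  exact h2.congr (fun K => (h1 K).symm)


end KempnerEleven

theorem kempner_limit_block_eleven :
    Filter.Tendsto
      (fun k : ℕ => ∑' n : ℕ,
        if 1 ≤ n ∧ {i : ℕ | Nat.testBit n i ∧ Nat.testBit n (i + 1)}.ncard = k then
          (1 : ℝ) / n else 0)
      Filter.atTop (nhds (4 * Real.log 2)) := by
  exact KempnerEleven.main
end
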